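/- arXiv:hep-th/9311121 — 9 statements merged into one kernel-verified Lean document; each statement's English description precedes it below -/
import Mathlib

section
/- Let π : 𝒜 → B(ℋ) be an injective algebra homomorphism and D a self-adjoint operator with [D, π(A)] bounded for all A ∈ 𝒜; extend π to the universal envelope by π(A₀ δA₁ ⋯ δAₖ) := π(A₀)[D, π(A₁)] ⋯ [D, π(Aₖ)]. Then J := ⊕ₖ (Kᵏ + δK^{k-1}), where Kᵏ := ker π ∩ Ωᵏ𝒜, is a two-sided ℕ-graded differential ideal of Ω𝒜. -/
/-- Let π : 𝒜 → B(ℋ) be an injective algebra homomorphism, D a symmetric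
(self-adjoint) operator with [D, π(A)] bounded for all A ∈ 𝒜, and extend π to
the universal envelope Ω𝒜 (abstracted as an ℕ-graded algebra Ω generated by
ι(𝒜) and δ) by π(A₀ δA₁ ⋯ δAₖ) = π(A₀)[D, π(A₁)] ⋯ [D, π(Aₖ)]. Then
J := ⊕ₖ (Kᵏ + δK^{k-1}), Kᵏ := ker π ∩ Ωᵏ𝒜, is a two-sided ℕ-graded
differential ideal of Ω𝒜. -/
theorem J_is_graded_differential_ideal
    (𝒜 Ω H : Type*) [Ring 𝒜] [Ring Ω] [Algebra ℂ 𝒜] [Algebra ℂ Ω]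
    [NormedAddCommGroup H] [InnerProductSpace ℂ H] [CompleteSpace H]
    (ι : 𝒜 →ₐ[ℂ] Ω) (δ : Ω →ₗ[ℂ] Ω)
    -- the ℕ-grading of Ω𝒜, generated by the monomials A₀ δA₁ ⋯ δAₖ
    (G : ℕ → Submodule ℂ Ω)
    (hGtop : (⨆ k, G k) = ⊤)
    (hGmul : ∀ i j, G i * G j ≤ G (i + j))
    (hG : ∀ k, G k = Submodule.span ℂ {x : Ω | ∃ (a₀ : 𝒜) (l : List 𝒜),
      l.length = k ∧ x = ι a₀ * (l.map (fun a => δ (ι a))).prod})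
    -- δ is an odd differential: degree +1, δ² = 0, graded Leibniz rule,
    -- acting on monomials by δ(A₀ δA₁ ⋯ δAₖ) = δA₀ δA₁ ⋯ δAₖ
    (hδdeg : ∀ k, (G k).map δ ≤ G (k + 1))
    (hδsq : ∀ x : Ω, δ (δ x) = 0)
    (hδLeib : ∀ k, ∀ x ∈ G k, ∀ y : Ω,
      δ (x * y) = δ x * y + ((-1 : ℂ) ^ k) • (x * δ y))
    (hδmono : ∀ (a₀ : 𝒜) (l : List 𝒜),
      δ (ι a₀ * (l.map (fun a => δ (ι a))).prod) =
        δ (ι a₀) * (l.map (fun a => δ (ι a))).prod)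
    -- the K-cycle: a symmetric Dirac operator D with bounded commutators,
    -- and the extension π of the representation of 𝒜 to Ω𝒜
    (D : H →ₗ[ℂ] H)
    (hD : ∀ v w : H, inner ℂ (D v) w = (inner ℂ v (D w) : ℂ))
    (π : Ω →ₐ[ℂ] (H →L[ℂ] H))
    (hπinj : Function.Injective (π.comp ι))
    (hπδ : ∀ (a : 𝒜) (v : H), (π (δ (ι a))) v = D ((π (ι a)) v) - (π (ι a)) (D v))
    -- the ideal J
    (K J : ℕ → Submodule ℂ Ω)
    (hK : ∀ k, K k = LinearMap.ker π.toLinearMap ⊓ G k)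
    (hJ0 : J 0 = K 0)
    (hJsucc : ∀ k, J (k + 1) = K (k + 1) ⊔ (K k).map δ) :
    -- J is ℕ-graded: Jᵏ ⊆ Ωᵏ𝒜
    (∀ k, J k ≤ G k) ∧
    -- J is a differential ideal: δ(Jᵏ) ⊆ J^{k+1}
    (∀ k, (J k).map δ ≤ J (k + 1)) ∧
    -- J is a two-sided ideal
    (∀ x ∈ ⨆ k, J k, ∀ y : Ω, x * y ∈ (⨆ k, J k) ∧ y * x ∈ ⨆ k, J k) := by
  have hKG : ∀ n, K n ≤ G n := fun n => (hK n) ▸ inf_le_right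
  have hKJ : ∀ n, K n ≤ J n := by
    intro n
    cases n with
    | zero => rw [hJ0]
    | succ m => rw [hJsucc]; exact le_sup_left
  have hδKJ : ∀ n, (K n).map δ ≤ J (n + 1) := fun n => (hJsucc n) ▸ le_sup_right
  -- the multiplication lemma for K
  have hKmul : ∀ m n z w, z ∈ K m → w ∈ G n →
      z * w ∈ K (m + n) ∧ w * z ∈ K (m + n) := by
    intro m n z w hz hw
    rw [hK m] at hz
    have hz0 : π z = 0 := LinearMap.mem_ker.mp hz.1
    constructor
    · rw [hK (m + n)]
      refine ⟨LinearMap.mem_ker.mpr ?_, hGmul m n (Submodule.mul_mem_mul hz.2 hw)⟩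
      show π (z * w) = 0
      rw [map_mul, hz0, zero_mul]
    · rw [hK (m + n)]
      refine ⟨LinearMap.mem_ker.mpr ?_, ?_⟩
      · show π (w * z) = 0
        rw [map_mul, hz0, mul_zero]
      · have := hGmul n m (Submodule.mul_mem_mul hw hz.2)
        rwa [Nat.add_comm n m] at this
  -- graded
  have hJG : ∀ k, J k ≤ G k := by
    intro k
    cases k with
    | zero => rw [hJ0]; exact hKG 0
    | succ m =>
      rw [hJsucc]
      exact sup_le (hKG (m + 1))
        (le_trans (Submodule.map_mono (hKG m)) (hδdeg m))
  refine ⟨hJG, ?_, ?_⟩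
  · -- differential
    intro k
    cases k with
    | zero =>
      rw [hJ0]
      exact hδKJ 0
    | succ m =>
      rw [hJsucc, Submodule.map_sup]
      refine sup_le (hδKJ (m + 1)) ?_
      intro x hx
      obtain ⟨y, hy, rfl⟩ := hx
      obtain ⟨z, hz, rfl⟩ := hy
      rw [hδsq z]
      exact zero_mem _
  · -- two-sided ideal
    -- key multiplication lemma
    have key : ∀ k j x, x ∈ J k → ∀ y ∈ G j,
        x * y ∈ J (k + j) ∧ y * x ∈ J (k + j) := by
      intro k j x hx y hy
      cases k with
      | zero =>
        rw [hJ0] at hx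
        exact ⟨hKJ _ (hKmul 0 j x y hx hy).1, hKJ _ (hKmul 0 j x y hx hy).2⟩
      | succ m =>
        rw [hJsucc] at hx
        obtain ⟨a, ha, b, hb, rfl⟩ := Submodule.mem_sup.mp hx
        obtain ⟨z, hz, rfl⟩ := hb
        have hzG : z ∈ G m := hKG m hz
        have hδyG : δ y ∈ G (j + 1) := hδdeg j ⟨y, hy, rfl⟩
        have he : m + 1 + j = m + j + 1 := by omega
        rw [he]
        constructor
        · rw [add_mul]
          refine add_mem (hKJ _ (by simpa [he] using (hKmul (m + 1) j a y ha hy).1)) ?_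
          have hL := hδLeib m z hzG y
          have heq : δ z * y = δ (z * y) - ((-1 : ℂ) ^ m) • (z * δ y) := by
            rw [hL]; exact (add_sub_cancel_right _ _).symm
          rw [heq]
          refine sub_mem (hδKJ (m + j) (Submodule.mem_map_of_mem (hKmul m j z y hz hy).1)) ?_
          exact Submodule.smul_mem _ _ (hKJ _ (hKmul m (j + 1) z (δ y) hz hδyG).1)
        · rw [mul_add]
          refine add_mem (hKJ _ (by simpa [he] using (hKmul (m + 1) j a y ha hy).2)) ?_
          have hne : ((-1 : ℂ) ^ j) ≠ 0 := pow_ne_zero _ (by norm_num)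
          refine (Submodule.smul_mem_iff _ hne).mp ?_
          have hL := hδLeib j y hy z
          have heq : ((-1 : ℂ) ^ j) • (y * δ z) = δ (y * z) - δ y * z := by
            rw [hL]; exact (add_sub_cancel_left _ _).symm
          rw [heq]
          refine sub_mem (hδKJ (m + j) ?_) ?_
          · exact Submodule.mem_map_of_mem (hKmul m j z y hz hy).2
          · exact hKJ _ (hKmul m (j + 1) z (δ y) hz hδyG).2
        done
    intro x hx y
    refine Submodule.iSup_induction (motive := fun x => ∀ y : Ω,
        x * y ∈ (⨆ k, J k) ∧ y * x ∈ ⨆ k, J k) _ hx ?_ ?_ ?_ y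
    · intro k x hxk y
      have hy : y ∈ ⨆ j, G j := by rw [hGtop]; trivial
      refine Submodule.iSup_induction (motive := fun y =>
          x * y ∈ (⨆ k, J k) ∧ y * x ∈ ⨆ k, J k) _ hy ?_ ?_ ?_
      · intro j y hyj
        exact ⟨Submodule.mem_iSup_of_mem (k + j) (key k j x hxk y hyj).1,
          Submodule.mem_iSup_of_mem (k + j) (key k j x hxk y hyj).2⟩
      · simp
      · intro y₁ y₂ h1 h2
        rw [mul_add, add_mul] at *
        exact ⟨add_mem h1.1 h2.1, add_mem h1.2 h2.2⟩
    · intro y; simp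
    · intro x₁ x₂ h1 h2 y
      rw [add_mul, mul_add]
      exact ⟨add_mem (h1 y).1 (h2 y).1, add_mem (h1 y).2 (h2 y).2⟩
end

section
/- With J the graded differential ideal Kᵏ + δK^{k-1} of the universal envelope, the formula d[π(ω)] := [π(δω)] gives a well-defined differential on Ω_D := ⊕ₖ π(Ωᵏ𝒜)/π(Jᵏ), making Ω_D an ℕ-graded differential algebra. -/
/-- With J the graded differential ideal Jᵏ = Kᵏ + δK^{k-1} of the universal
envelope, the formula d[π(ω)] := [π(δω)] gives a well-defined differential on
Ω_D := ⊕ₖ π(Ωᵏ𝒜)/π(Jᵏ): if π(ω) and π(ω') define the same class modulo π(Jᵏ)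
then so do π(δω) and π(δω') modulo π(J^{k+1}); moreover d² = 0 and d satisfies
the graded Leibniz rule on classes, making Ω_D an ℕ-graded differential
algebra. -/
theorem dD_well_defined
    (𝒜 Ω H : Type*) [Ring 𝒜] [Ring Ω] [Algebra ℂ 𝒜] [Algebra ℂ Ω]
    [NormedAddCommGroup H] [InnerProductSpace ℂ H] [CompleteSpace H]
    (ι : 𝒜 →ₐ[ℂ] Ω) (δ : Ω →ₗ[ℂ] Ω)
    -- the ℕ-grading of Ω𝒜, generated by the monomials A₀ δA₁ ⋯ δAₖ
    (G : ℕ → Submodule ℂ Ω)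
    (hGtop : (⨆ k, G k) = ⊤)
    (hGmul : ∀ i j, G i * G j ≤ G (i + j))
    (hG : ∀ k, G k = Submodule.span ℂ {x : Ω | ∃ (a₀ : 𝒜) (l : List 𝒜),
      l.length = k ∧ x = ι a₀ * (l.map (fun a => δ (ι a))).prod})
    -- δ is an odd differential: degree +1, δ² = 0, graded Leibniz rule,
    -- acting on monomials by δ(A₀ δA₁ ⋯ δAₖ) = δA₀ δA₁ ⋯ δAₖ
    (hδdeg : ∀ k, (G k).map δ ≤ G (k + 1))
    (hδsq : ∀ x : Ω, δ (δ x) = 0)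
    (hδLeib : ∀ k, ∀ x ∈ G k, ∀ y : Ω,
      δ (x * y) = δ x * y + ((-1 : ℂ) ^ k) • (x * δ y))
    (hδmono : ∀ (a₀ : 𝒜) (l : List 𝒜),
      δ (ι a₀ * (l.map (fun a => δ (ι a))).prod) =
        δ (ι a₀) * (l.map (fun a => δ (ι a))).prod)
    -- the K-cycle: a symmetric Dirac operator D with bounded commutators,
    -- and the extension π of the representation of 𝒜 to Ω𝒜
    (D : H →ₗ[ℂ] H)
    (hD : ∀ v w : H, inner ℂ (D v) w = (inner ℂ v (D w) : ℂ))
    (π : Ω →ₐ[ℂ] (H →L[ℂ] H))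
    (hπinj : Function.Injective (π.comp ι))
    (hπδ : ∀ (a : 𝒜) (v : H), (π (δ (ι a))) v = D ((π (ι a)) v) - (π (ι a)) (D v))
    -- the ideal J
    (K J : ℕ → Submodule ℂ Ω)
    (hK : ∀ k, K k = LinearMap.ker π.toLinearMap ⊓ G k)
    (hJ0 : J 0 = K 0)
    (hJsucc : ∀ k, J (k + 1) = K (k + 1) ⊔ (K k).map δ) :
    -- d[π(ω)] := [π(δω)] is well defined on π(Ωᵏ𝒜)/π(Jᵏ)
    (∀ k, ∀ ω ∈ G k, ∀ ω' ∈ G k,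
      π ω - π ω' ∈ (J k).map π.toLinearMap →
      π (δ ω) - π (δ ω') ∈ (J (k + 1)).map π.toLinearMap) ∧
    -- d² = 0 on classes
    (∀ k, ∀ ω ∈ G k, π (δ (δ ω)) ∈ (J (k + 2)).map π.toLinearMap) ∧
    -- the graded Leibniz rule holds on classes
    (∀ k l, ∀ ω ∈ G k, ∀ ν ∈ G l,
      π (δ (ω * ν)) - (π (δ ω) * π ν + ((-1 : ℂ) ^ k) • (π ω * π (δ ν)))
        ∈ (J (k + l + 1)).map π.toLinearMap) := by
  have hJle : ∀ k, J k ≤ G k := by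
    intro k
    match k with
    | 0 => rw [hJ0, hK]; exact inf_le_right
    | k + 1 =>
      rw [hJsucc]
      apply sup_le
      · rw [hK]; exact inf_le_right
      · refine le_trans (Submodule.map_mono ?_) (hδdeg k)
        rw [hK]; exact inf_le_right
  have hδJ : ∀ k, ∀ η ∈ J k, δ η ∈ J (k + 1) := by
    intro k η hη
    match k with
    | 0 =>
      rw [hJ0] at hη
      rw [hJsucc]
      exact Submodule.mem_sup_right (Submodule.mem_map_of_mem hη)
    | k + 1 =>
      rw [hJsucc] at hη
      rcases Submodule.mem_sup.mp hη with ⟨a, ha, b, hb, rfl⟩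
      rcases hb with ⟨c, hc, rfl⟩
      have : δ (a + δ c) = δ a := by rw [map_add, hδsq, add_zero]
      rw [this, hJsucc (k + 1)]
      exact Submodule.mem_sup_right (Submodule.mem_map_of_mem ha)
  refine ⟨?_, ?_, ?_⟩
  · intro k ω hω ω' hω' h
    rcases h with ⟨η, hη, hπη⟩
    have hξK : ω - ω' - η ∈ K k := by
      rw [hK]
      refine ⟨?_, (G k).sub_mem ((G k).sub_mem hω hω') (hJle k hη)⟩
      have : π.toLinearMap (ω - ω' - η) = 0 := by
        simp only [map_sub, hπη, AlgHom.toLinearMap_apply]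
        abel
      simpa [LinearMap.mem_ker] using this
    have hmem : δ ω - δ ω' ∈ J (k + 1) := by
      have hsum : δ ω - δ ω' = δ (ω - ω' - η) + δ η := by
        simp only [map_sub]; abel
      rw [hsum]
      refine Submodule.add_mem _ ?_ (hδJ k η hη)
      rw [hJsucc]
      exact Submodule.mem_sup_right (Submodule.mem_map_of_mem hξK)
    exact ⟨δ ω - δ ω', hmem, by simp⟩
  · intro k ω hω
    rw [hδsq, map_zero]
    exact Submodule.zero_mem _
  · intro k l ω hω ν hν
    have : π (δ (ω * ν)) - (π (δ ω) * π ν + ((-1 : ℂ) ^ k) • (π ω * π (δ ν)))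
        = 0 := by
      rw [hδLeib k ω hω ν]
      simp [map_add, map_mul]
    rw [this]
    exact Submodule.zero_mem _
end

section
/- Let 𝒜 be a unital subalgebra of the N×N complex matrices, ℳ ∈ M_N(ℂ), and form the K-cycle with π the inclusion and differential represented by commutators with ℳ, i.e. π(a₀ δa₁ ⋯ δaₖ) = a₀[ℳ,a₁]⋯[ℳ,aₖ]. If [ℳ², a] ∈ π(J²) for all a ∈ 𝒜, then for every k ≥ 2, π(Jᵏ) = Σ_{j=0}^{k-2} π(Ωʲ𝒜 · J² · Ω^{k-j-2}𝒜); that is, the ideal π(J) is generated by π(J²). -/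
open Matrix

namespace PiJAux

variable {𝒜 Ω : Type*} [Ring 𝒜] [Ring Ω] [Algebra ℂ 𝒜] [Algebra ℂ Ω] {N : ℕ}
variable (ι : 𝒜 →ₐ[ℂ] Ω) (δ : Ω →ₗ[ℂ] Ω) (ℳ : Matrix (Fin N) (Fin N) ℂ)
  (π : Ω →ₐ[ℂ] Matrix (Fin N) (Fin N) ℂ)

/-- commutator [ℳ, π(ι a)] -/
noncomputable def Cm (a : 𝒜) : Matrix (Fin N) (Fin N) ℂ :=
  ℳ * π (ι a) - π (ι a) * ℳ

/-- product of commutators -/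
noncomputable def Pl (l : List 𝒜) : Matrix (Fin N) (Fin N) ℂ :=
  (l.map (Cm ι ℳ π)).prod

@[simp] lemma Pl_nil : Pl ι ℳ π ([] : List 𝒜) = 1 := rfl

@[simp] lemma Pl_cons (a : 𝒜) (l : List 𝒜) :
    Pl ι ℳ π (a :: l) = Cm ι ℳ π a * Pl ι ℳ π l := by
  simp [Pl]

lemma Pl_append (l₁ l₂ : List 𝒜) :
    Pl ι ℳ π (l₁ ++ l₂) = Pl ι ℳ π l₁ * Pl ι ℳ π l₂ := by
  simp [Pl]

/-- monomial a₀ δa₁ ⋯ δaₖ -/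
noncomputable def mon (a : 𝒜) (l : List 𝒜) : Ω :=
  ι a * (l.map fun b => δ (ι b)).prod

lemma pi_mon (hπδ : ∀ a : 𝒜, π (δ (ι a)) = ℳ * π (ι a) - π (ι a) * ℳ)
    (a : 𝒜) (l : List 𝒜) :
    π (mon ι δ a l) = π (ι a) * Pl ι ℳ π l := by
  rw [mon, _root_.map_mul, map_list_prod, List.map_map]
  congr 1
  unfold Pl
  exact congrArg List.prod (List.map_congr_left fun b _ => hπδ b)

lemma piδ_mon (hδmono : ∀ (a₀ : 𝒜) (l : List 𝒜),
      δ (ι a₀ * (l.map (fun a => δ (ι a))).prod) =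
        δ (ι a₀) * (l.map (fun a => δ (ι a))).prod)
    (hπδ : ∀ a : 𝒜, π (δ (ι a)) = ℳ * π (ι a) - π (ι a) * ℳ)
    (a : 𝒜) (l : List 𝒜) :
    π (δ (mon ι δ a l)) = Cm ι ℳ π a * Pl ι ℳ π l := by
  rw [mon, hδmono, _root_.map_mul, map_list_prod, List.map_map, hπδ]
  congr 1
  unfold Pl
  exact congrArg List.prod (List.map_congr_left fun b _ => hπδ b)

@[simp] lemma Cm_one : Cm ι ℳ π (1 : 𝒜) = 0 := by
  simp [Cm]

lemma Cm_mul (a b : 𝒜) :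
    Cm ι ℳ π (a * b) = Cm ι ℳ π a * π (ι b) + π (ι a) * Cm ι ℳ π b := by
  simp only [Cm, _root_.map_mul]
  noncomm_ring

lemma M_Cm (a : 𝒜) :
    ℳ * Cm ι ℳ π a =
      (ℳ ^ 2 * π (ι a) - π (ι a) * ℳ ^ 2) - Cm ι ℳ π a * ℳ := by
  simp only [Cm, pow_two]
  noncomm_ring


noncomputable def PG (j : ℕ) : Submodule ℂ (Matrix (Fin N) (Fin N) ℂ) :=
  Submodule.span ℂ
    {X | ∃ (a : 𝒜) (l : List 𝒜), l.length = j ∧ X = π (ι a) * Pl ι ℳ π l}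

lemma mem_PG (a : 𝒜) (l : List 𝒜) :
    π (ι a) * Pl ι ℳ π l ∈ PG ι ℳ π l.length :=
  Submodule.subset_span ⟨a, l, rfl, rfl⟩

lemma Pl_mem_PG (l : List 𝒜) : Pl ι ℳ π l ∈ PG ι ℳ π l.length := by
  simpa using mem_PG ι ℳ π 1 l

lemma one_mem_PG0 : (1 : Matrix (Fin N) (Fin N) ℂ) ∈ PG ι ℳ π (0 : ℕ) := by
  simpa using Pl_mem_PG ι ℳ π ([] : List 𝒜)

lemma piA_mul_PG (a : 𝒜) {j : ℕ} {X : Matrix (Fin N) (Fin N) ℂ}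
    (hX : X ∈ PG ι ℳ π j) : π (ι a) * X ∈ PG ι ℳ π j := by
  induction hX using Submodule.span_induction with
  | mem x hx =>
    obtain ⟨b, l, hl, rfl⟩ := hx
    rw [← mul_assoc, ← _root_.map_mul, ← _root_.map_mul]
    exact hl ▸ mem_PG ι ℳ π (a * b) l
  | zero => simpa using Submodule.zero_mem _
  | add x y _ _ hx hy => rw [mul_add]; exact Submodule.add_mem _ hx hy
  | smul c x _ hx => rw [mul_smul_comm]; exact Submodule.smul_mem _ _ hx

lemma Cm_mul_PG (a : 𝒜) {j : ℕ} {X : Matrix (Fin N) (Fin N) ℂ}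
    (hX : X ∈ PG ι ℳ π j) : Cm ι ℳ π a * X ∈ PG ι ℳ π (j + 1) := by
  induction hX using Submodule.span_induction with
  | mem x hx =>
    obtain ⟨b, l, hl, rfl⟩ := hx
    have h : Cm ι ℳ π a * (π (ι b) * Pl ι ℳ π l) =
        π (ι 1) * Pl ι ℳ π ((a * b) :: l) - π (ι a) * Pl ι ℳ π (b :: l) := by
      rw [Pl_cons, Pl_cons, Cm_mul, _root_.map_one, _root_.map_one]
      noncomm_ring
    rw [h]
    have h1 := mem_PG ι ℳ π 1 ((a * b) :: l)
    have h2 := mem_PG ι ℳ π a (b :: l)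
    simp only [List.length_cons, hl] at h1 h2
    exact Submodule.sub_mem _ h1 h2
  | zero => simpa using Submodule.zero_mem _
  | add x y _ _ hx hy => rw [mul_add]; exact Submodule.add_mem _ hx hy
  | smul c x _ hx => rw [mul_smul_comm]; exact Submodule.smul_mem _ _ hx


variable (T2 : Submodule ℂ (Matrix (Fin N) (Fin N) ℂ))

/-- the ideal-shaped sum Σ_j PG j * T2 * PG (k-j-2) -/
noncomputable def SS (k : ℕ) : Submodule ℂ (Matrix (Fin N) (Fin N) ℂ) :=
  ∑ j ∈ Finset.range (k - 1), PG ι ℳ π j * T2 * PG ι ℳ π (k - j - 2)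

lemma finsum_le {ι' M' : Type*} [AddCommGroup M'] [Module ℂ M']
    {s : Finset ι'} {f : ι' → Submodule ℂ M'} {U : Submodule ℂ M'}
    (h : ∀ i ∈ s, f i ≤ U) : (∑ i ∈ s, f i) ≤ U := by
  classical
  induction s using Finset.induction with
  | empty => simp
  | insert i s hni ih =>
    rw [Finset.sum_insert hni, Submodule.add_eq_sup]
    exact sup_le (h i (Finset.mem_insert_self _ _))
      (ih fun j hj => h j (Finset.mem_insert_of_mem hj))

lemma le_finsum {ι' M' : Type*} [AddCommGroup M'] [Module ℂ M']
    {s : Finset ι'} {f : ι' → Submodule ℂ M'} {i : ι'} (hi : i ∈ s) :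
    f i ≤ ∑ j ∈ s, f j :=
  Finset.single_le_sum (f := f) (fun j _ => zero_le) hi

lemma mem_SS_of {k j : ℕ} (hj : j ∈ Finset.range (k - 1))
    {x t z : Matrix (Fin N) (Fin N) ℂ}
    (hx : x ∈ PG ι ℳ π j) (ht : t ∈ T2) (hz : z ∈ PG ι ℳ π (k - j - 2)) :
    x * t * z ∈ SS ι ℳ π T2 k :=
  le_finsum hj (Submodule.mul_mem_mul (Submodule.mul_mem_mul hx ht) hz)

lemma Cm_mul_SS (a : 𝒜) {k : ℕ} {x : Matrix (Fin N) (Fin N) ℂ}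
    (hx : x ∈ SS ι ℳ π T2 k) :
    Cm ι ℳ π a * x ∈ SS ι ℳ π T2 (k + 1) := by
  set L := LinearMap.mulLeft ℂ (Cm ι ℳ π a) with hL
  have key : SS ι ℳ π T2 k ≤ Submodule.comap L (SS ι ℳ π T2 (k + 1)) := by
    apply finsum_le
    intro j hj
    rw [Submodule.mul_le]
    intro y hy
    refine Submodule.mul_induction_on
      (C := fun y => ∀ z ∈ PG ι ℳ π (k - j - 2),
        y * z ∈ Submodule.comap L (SS ι ℳ π T2 (k + 1))) hy ?_ ?_
    · intro p hp t ht z hz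
      have hj' : j + 1 ∈ Finset.range (k + 1 - 1) := by
        simp only [Finset.mem_range] at hj ⊢; omega
      have heq : Cm ι ℳ π a * (p * t * z) = (Cm ι ℳ π a * p) * t * z := by
        noncomm_ring
      simp only [Submodule.mem_comap, hL, LinearMap.mulLeft_apply, heq]
      have h2 : k + 1 - (j + 1) - 2 = k - j - 2 := by omega
      exact mem_SS_of ι ℳ π T2 hj' (Cm_mul_PG ι ℳ π a hp) ht (h2 ▸ hz)
    · intro y₁ y₂ h₁ h₂ z hz
      have e : (y₁ + y₂) * z = y₁ * z + y₂ * z := by noncomm_ring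
      simp only [Submodule.mem_comap, hL, LinearMap.mulLeft_apply] at h₁ h₂ ⊢
      rw [e, mul_add]
      exact Submodule.add_mem _ (h₁ z hz) (h₂ z hz)
  exact key hx

lemma piA_mul_SS (a : 𝒜) {k : ℕ} {x : Matrix (Fin N) (Fin N) ℂ}
    (hx : x ∈ SS ι ℳ π T2 k) :
    π (ι a) * x ∈ SS ι ℳ π T2 k := by
  set L := LinearMap.mulLeft ℂ (π (ι a)) with hL
  have key : SS ι ℳ π T2 k ≤ Submodule.comap L (SS ι ℳ π T2 k) := by
    apply finsum_le
    intro j hj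
    rw [Submodule.mul_le]
    intro y hy
    refine Submodule.mul_induction_on
      (C := fun y => ∀ z ∈ PG ι ℳ π (k - j - 2),
        y * z ∈ Submodule.comap L (SS ι ℳ π T2 k)) hy ?_ ?_
    · intro p hp t ht z hz
      have heq : π (ι a) * (p * t * z) = (π (ι a) * p) * t * z := by
        noncomm_ring
      simp only [Submodule.mem_comap, hL, LinearMap.mulLeft_apply, heq]
      exact mem_SS_of ι ℳ π T2 hj (piA_mul_PG ι ℳ π a hp) ht hz
    · intro y₁ y₂ h₁ h₂ z hz
      have e : (y₁ + y₂) * z = y₁ * z + y₂ * z := by noncomm_ring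
      simp only [Submodule.mem_comap, hL, LinearMap.mulLeft_apply] at h₁ h₂ ⊢
      rw [e, mul_add]
      exact Submodule.add_mem _ (h₁ z hz) (h₂ z hz)
  exact key hx


lemma keyB (hM2' : ∀ a : 𝒜, ℳ ^ 2 * π (ι a) - π (ι a) * ℳ ^ 2 ∈ T2)
    (l : List 𝒜) :
    ℳ * Pl ι ℳ π l - ((-1 : ℂ) ^ l.length) • (Pl ι ℳ π l * ℳ) ∈
      SS ι ℳ π T2 (l.length + 1) := by
  induction l with
  | nil => simp
  | cons a l ih =>
    simp only [Pl_cons, List.length_cons]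
    have key : ℳ * (Cm ι ℳ π a * Pl ι ℳ π l) -
        ((-1 : ℂ) ^ (l.length + 1)) • (Cm ι ℳ π a * Pl ι ℳ π l * ℳ) =
        (ℳ ^ 2 * π (ι a) - π (ι a) * ℳ ^ 2) * Pl ι ℳ π l -
          Cm ι ℳ π a *
            (ℳ * Pl ι ℳ π l - ((-1 : ℂ) ^ l.length) • (Pl ι ℳ π l * ℳ)) := by
      rw [pow_succ, mul_neg_one, neg_smul, sub_neg_eq_add, ← mul_assoc, M_Cm]
      simp only [sub_mul, mul_sub, mul_smul_comm, mul_assoc]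
      abel
    rw [key]
    refine Submodule.sub_mem _ ?_ (Cm_mul_SS ι ℳ π T2 a ih)
    have hj0 : 0 ∈ Finset.range (l.length + 1 + 1 - 1) := by
      simp
    have hm := mem_SS_of ι ℳ π T2 hj0 (one_mem_PG0 ι ℳ π) (hM2' a)
      (show Pl ι ℳ π l ∈ PG ι ℳ π (l.length + 1 + 1 - 0 - 2) by
        simpa using Pl_mem_PG ι ℳ π l)
    simpa using hm

lemma keyC
    (hδmono : ∀ (a₀ : 𝒜) (l : List 𝒜),
      δ (ι a₀ * (l.map (fun a => δ (ι a))).prod) =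
        δ (ι a₀) * (l.map (fun a => δ (ι a))).prod)
    (hπδ : ∀ a : 𝒜, π (δ (ι a)) = ℳ * π (ι a) - π (ι a) * ℳ)
    (hM2' : ∀ a : 𝒜, ℳ ^ 2 * π (ι a) - π (ι a) * ℳ ^ 2 ∈ T2)
    (n : ℕ) {ω : Ω}
    (hω : ω ∈ Submodule.span ℂ {x : Ω | ∃ (a₀ : 𝒜) (l : List 𝒜),
      l.length = n ∧ x = ι a₀ * (l.map (fun a => δ (ι a))).prod}) :
    ℳ * π ω - ((-1 : ℂ) ^ n) • (π ω * ℳ) - π (δ ω) ∈ SS ι ℳ π T2 (n + 1) := by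
  induction hω using Submodule.span_induction with
  | mem x hx =>
    obtain ⟨a, l, hl, rfl⟩ := hx
    have hπ := pi_mon ι δ ℳ π hπδ a l
    have hπd := piδ_mon ι δ ℳ π hδmono hπδ a l
    rw [show (ι a * (l.map (fun b => δ (ι b))).prod) = mon ι δ a l from rfl,
      hπ, hπd]
    have key : ℳ * (π (ι a) * Pl ι ℳ π l) -
        ((-1 : ℂ) ^ n) • (π (ι a) * Pl ι ℳ π l * ℳ) -
        Cm ι ℳ π a * Pl ι ℳ π l =
        π (ι a) * (ℳ * Pl ι ℳ π l - ((-1 : ℂ) ^ n) • (Pl ι ℳ π l * ℳ)) := by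
      simp only [Cm, sub_mul, mul_sub, mul_smul_comm, mul_assoc]
      abel
    rw [key]
    exact hl ▸ piA_mul_SS ι ℳ π T2 a (keyB ι ℳ π T2 hM2' l)
  | zero => simp
  | add x y hx hy ihx ihy =>
    have e : ℳ * π (x + y) - ((-1 : ℂ) ^ n) • (π (x + y) * ℳ) - π (δ (x + y)) =
        (ℳ * π x - ((-1 : ℂ) ^ n) • (π x * ℳ) - π (δ x)) +
        (ℳ * π y - ((-1 : ℂ) ^ n) • (π y * ℳ) - π (δ y)) := by
      simp only [map_add, mul_add, add_mul, smul_add]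
      abel
    rw [e]
    exact Submodule.add_mem _ ihx ihy
  | smul c x hx ihx =>
    have e : ℳ * π (c • x) - ((-1 : ℂ) ^ n) • (π (c • x) * ℳ) - π (δ (c • x)) =
        c • (ℳ * π x - ((-1 : ℂ) ^ n) • (π x * ℳ) - π (δ x)) := by
      simp only [_root_.map_smul, smul_sub, mul_smul_comm, smul_mul_assoc]
      rw [smul_comm c ((-1 : ℂ) ^ n)]
    rw [e]
    exact Submodule.smul_mem _ _ ihx


noncomputable def QQ (n : ℕ) :
    Submodule ℂ (Matrix (Fin N) (Fin N) ℂ × Matrix (Fin N) (Fin N) ℂ) :=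
  Submodule.span ℂ {pq | ∃ (a : 𝒜) (l : List 𝒜), l.length = n ∧
    pq = (π (ι a) * Pl ι ℳ π l, Cm ι ℳ π a * Pl ι ℳ π l)}

lemma pairP_mon (la : List 𝒜) : ∀ (a b : 𝒜) (lb : List 𝒜),
    ((π (ι a) * Pl ι ℳ π la) * (π (ι b) * Pl ι ℳ π lb),
     (Cm ι ℳ π a * Pl ι ℳ π la) * (π (ι b) * Pl ι ℳ π lb) +
       ((-1 : ℂ) ^ la.length) •
         ((π (ι a) * Pl ι ℳ π la) * (Cm ι ℳ π b * Pl ι ℳ π lb)))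
    ∈ QQ ι ℳ π (la.length + lb.length) := by
  induction la using List.reverseRecOn with
  | nil =>
    intro a b lb
    have heq : ((π (ι a) * Pl ι ℳ π ([] : List 𝒜)) * (π (ι b) * Pl ι ℳ π lb),
        (Cm ι ℳ π a * Pl ι ℳ π ([] : List 𝒜)) * (π (ι b) * Pl ι ℳ π lb) +
          ((-1 : ℂ) ^ (List.length ([] : List 𝒜))) •
            ((π (ι a) * Pl ι ℳ π ([] : List 𝒜)) * (Cm ι ℳ π b * Pl ι ℳ π lb)))
        = (π (ι (a * b)) * Pl ι ℳ π lb, Cm ι ℳ π (a * b) * Pl ι ℳ π lb) := by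
      refine Prod.ext ?_ ?_
      · simp [_root_.map_mul, mul_assoc]
      · simp only [Pl_nil, List.length_nil, pow_zero, one_smul, mul_one, Cm_mul]
        noncomm_ring
    rw [heq]
    exact Submodule.subset_span ⟨a * b, lb, by simp, rfl⟩
  | append_singleton l t ih =>
    intro a b lb
    have hgen : (π (ι a) * Pl ι ℳ π (l ++ (t * b) :: lb),
        Cm ι ℳ π a * Pl ι ℳ π (l ++ (t * b) :: lb)) ∈
        QQ ι ℳ π (l.length + (lb.length + 1)) :=
      Submodule.subset_span ⟨a, l ++ (t * b) :: lb, by simp, rfl⟩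
    have hmem := Submodule.sub_mem _ hgen (ih a t (b :: lb))
    have hlen : l.length + ((b :: lb).length) = l.length + (lb.length + 1) := by
      simp
    have hlen2 : (l ++ [t]).length + lb.length = l.length + (lb.length + 1) := by
      simp; omega
    rw [hlen2]
    have heq : ((π (ι a) * Pl ι ℳ π (l ++ [t])) * (π (ι b) * Pl ι ℳ π lb),
        (Cm ι ℳ π a * Pl ι ℳ π (l ++ [t])) * (π (ι b) * Pl ι ℳ π lb) +
          ((-1 : ℂ) ^ (l ++ [t]).length) •
            ((π (ι a) * Pl ι ℳ π (l ++ [t])) * (Cm ι ℳ π b * Pl ι ℳ π lb)))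
        = (π (ι a) * Pl ι ℳ π (l ++ (t * b) :: lb),
            Cm ι ℳ π a * Pl ι ℳ π (l ++ (t * b) :: lb)) -
          ((π (ι a) * Pl ι ℳ π l) * (π (ι t) * Pl ι ℳ π (b :: lb)),
            (Cm ι ℳ π a * Pl ι ℳ π l) * (π (ι t) * Pl ι ℳ π (b :: lb)) +
              ((-1 : ℂ) ^ l.length) •
                ((π (ι a) * Pl ι ℳ π l) * (Cm ι ℳ π t * Pl ι ℳ π (b :: lb)))) := by
      refine Prod.ext ?_ ?_
      · simp only [Prod.fst_sub, Pl_append, Pl_cons, Pl_nil, mul_one, Cm_mul,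
          List.length_append, List.length_cons, List.length_nil]
        noncomm_ring
      · simp only [Prod.snd_sub, Pl_append, Pl_cons, Pl_nil, mul_one, Cm_mul,
          List.length_append, List.length_cons, List.length_nil, pow_succ,
          mul_neg_one, neg_smul, smul_add, smul_smul, mul_smul_comm,
          smul_mul_assoc, mul_add, add_mul, mul_assoc, mul_sub, sub_mul]
        abel
    rw [heq]
    exact hmem


lemma pairP
    (hδmono : ∀ (a₀ : 𝒜) (l : List 𝒜),
      δ (ι a₀ * (l.map (fun a => δ (ι a))).prod) =
        δ (ι a₀) * (l.map (fun a => δ (ι a))).prod)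
    (hπδ : ∀ a : 𝒜, π (δ (ι a)) = ℳ * π (ι a) - π (ι a) * ℳ)
    (j p : ℕ) {u w : Ω}
    (hu : u ∈ Submodule.span ℂ {x : Ω | ∃ (a₀ : 𝒜) (l : List 𝒜),
      l.length = j ∧ x = ι a₀ * (l.map (fun a => δ (ι a))).prod})
    (hw : w ∈ Submodule.span ℂ {x : Ω | ∃ (a₀ : 𝒜) (l : List 𝒜),
      l.length = p ∧ x = ι a₀ * (l.map (fun a => δ (ι a))).prod}) :
    (π u * π w, π (δ u) * π w + ((-1 : ℂ) ^ j) • (π u * π (δ w)))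
      ∈ QQ ι ℳ π (j + p) := by
  induction hu using Submodule.span_induction with
  | mem x hx =>
    induction hw using Submodule.span_induction with
    | mem y hy =>
      obtain ⟨a, la, hla, rfl⟩ := hx
      obtain ⟨b, lb, hlb, rfl⟩ := hy
      rw [show (ι a * (la.map (fun c => δ (ι c))).prod) = mon ι δ a la from rfl,
        show (ι b * (lb.map (fun c => δ (ι c))).prod) = mon ι δ b lb from rfl,
        pi_mon ι δ ℳ π hπδ, pi_mon ι δ ℳ π hπδ,
        piδ_mon ι δ ℳ π hδmono hπδ, piδ_mon ι δ ℳ π hδmono hπδ]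
      subst hla hlb
      exact pairP_mon ι ℳ π la a b lb
    | zero => simp; exact Submodule.zero_mem _
    | add y₁ y₂ h₁ h₂ ih₁ ih₂ =>
      have e : (π x * π (y₁ + y₂), π (δ x) * π (y₁ + y₂) +
            ((-1 : ℂ) ^ j) • (π x * π (δ (y₁ + y₂)))) =
          (π x * π y₁, π (δ x) * π y₁ + ((-1 : ℂ) ^ j) • (π x * π (δ y₁))) +
          (π x * π y₂, π (δ x) * π y₂ + ((-1 : ℂ) ^ j) • (π x * π (δ y₂))) := by
        refine Prod.ext ?_ ?_ <;>
          simp only [Prod.fst_add, Prod.snd_add, map_add, mul_add, smul_add] <;>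
          abel
      rw [e]
      exact Submodule.add_mem _ ih₁ ih₂
    | smul c y hy ihy =>
      have e : (π x * π (c • y), π (δ x) * π (c • y) +
            ((-1 : ℂ) ^ j) • (π x * π (δ (c • y)))) =
          c • (π x * π y, π (δ x) * π y + ((-1 : ℂ) ^ j) • (π x * π (δ y))) := by
        refine Prod.ext ?_ ?_ <;>
          simp only [Prod.smul_fst, Prod.smul_snd, _root_.map_smul, smul_add,
            mul_smul_comm, smul_mul_assoc]
        rw [smul_comm c ((-1 : ℂ) ^ j)]
      rw [e]
      exact Submodule.smul_mem _ _ ihy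
  | zero => simp; exact Submodule.zero_mem _
  | add x₁ x₂ h₁ h₂ ih₁ ih₂ =>
    have e : (π (x₁ + x₂) * π w, π (δ (x₁ + x₂)) * π w +
          ((-1 : ℂ) ^ j) • (π (x₁ + x₂) * π (δ w))) =
        (π x₁ * π w, π (δ x₁) * π w + ((-1 : ℂ) ^ j) • (π x₁ * π (δ w))) +
        (π x₂ * π w, π (δ x₂) * π w + ((-1 : ℂ) ^ j) • (π x₂ * π (δ w))) := by
      refine Prod.ext ?_ ?_ <;>
        simp only [Prod.fst_add, Prod.snd_add, map_add, add_mul, smul_add] <;>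
        abel
    rw [e]
    exact Submodule.add_mem _ ih₁ ih₂
  | smul c x hx ihx =>
    have e : (π (c • x) * π w, π (δ (c • x)) * π w +
          ((-1 : ℂ) ^ j) • (π (c • x) * π (δ w))) =
        c • (π x * π w, π (δ x) * π w + ((-1 : ℂ) ^ j) • (π x * π (δ w))) := by
      refine Prod.ext ?_ ?_ <;>
        simp only [Prod.smul_fst, Prod.smul_snd, _root_.map_smul, smul_add,
          mul_smul_comm, smul_mul_assoc]
      rw [smul_comm c ((-1 : ℂ) ^ j)]
    rw [e]
    exact Submodule.smul_mem _ _ ihx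

lemma QQ_realize
    (hδmono : ∀ (a₀ : 𝒜) (l : List 𝒜),
      δ (ι a₀ * (l.map (fun a => δ (ι a))).prod) =
        δ (ι a₀) * (l.map (fun a => δ (ι a))).prod)
    (hπδ : ∀ a : 𝒜, π (δ (ι a)) = ℳ * π (ι a) - π (ι a) * ℳ)
    (n : ℕ) {pq : Matrix (Fin N) (Fin N) ℂ × Matrix (Fin N) (Fin N) ℂ}
    (h : pq ∈ QQ ι ℳ π n) :
    ∃ ζ ∈ Submodule.span ℂ {x : Ω | ∃ (a₀ : 𝒜) (l : List 𝒜),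
      l.length = n ∧ x = ι a₀ * (l.map (fun a => δ (ι a))).prod},
      π ζ = pq.1 ∧ π (δ ζ) = pq.2 := by
  have hle : QQ ι ℳ π n ≤ Submodule.map
      (LinearMap.prod π.toLinearMap (π.toLinearMap ∘ₗ δ))
      (Submodule.span ℂ {x : Ω | ∃ (a₀ : 𝒜) (l : List 𝒜),
        l.length = n ∧ x = ι a₀ * (l.map (fun a => δ (ι a))).prod}) := by
    rw [QQ]
    apply Submodule.span_le.mpr
    rintro pq ⟨a, l, hl, rfl⟩
    refine ⟨mon ι δ a l, Submodule.subset_span ⟨a, l, hl, rfl⟩, ?_⟩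
    simp only [LinearMap.prod_apply, Function.prod, LinearMap.coe_comp,
      Function.comp_apply, AlgHom.toLinearMap_apply, LinearMap.coe_mk]
    rw [pi_mon ι δ ℳ π hπδ, piδ_mon ι δ ℳ π hδmono hπδ]
  obtain ⟨ζ, hζ, hF⟩ := hle h
  refine ⟨ζ, hζ, ?_, ?_⟩
  · rw [← hF]; rfl
  · rw [← hF]; rfl

end PiJAux

open PiJAux

/-- Matrix K-cycle: 𝒜 a unital ℂ-algebra with Ω𝒜 its universal differential
envelope (abstracted as an ℕ-graded algebra Ω generated by ι(𝒜) and δ), and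
π : Ω → M_N(ℂ) the representation with π(a₀ δa₁ ⋯ δaₖ) = a₀[ℳ,a₁]⋯[ℳ,aₖ],
injective on 𝒜. If [ℳ², π(ι a)] ∈ π(J²) for all a ∈ 𝒜, then for every k ≥ 2,
π(Jᵏ) = Σ_{j=0}^{k-2} π(Ωʲ𝒜 · J² · Ω^{k-j-2}𝒜): the ideal π(J) is generated
by π(J²). -/
theorem piJ_generated_by_piJ2
    (𝒜 Ω : Type*) [Ring 𝒜] [Ring Ω] [Algebra ℂ 𝒜] [Algebra ℂ Ω] (N : ℕ)
    (ι : 𝒜 →ₐ[ℂ] Ω) (δ : Ω →ₗ[ℂ] Ω)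
    -- the ℕ-grading of Ω𝒜, generated by the monomials a₀ δa₁ ⋯ δaₖ
    (G : ℕ → Submodule ℂ Ω)
    (hG : ∀ k, G k = Submodule.span ℂ {x : Ω | ∃ (a₀ : 𝒜) (l : List 𝒜),
      l.length = k ∧ x = ι a₀ * (l.map (fun a => δ (ι a))).prod})
    -- δ is the universal differential: δ(a₀ δa₁ ⋯ δaₖ) = δa₀ δa₁ ⋯ δaₖ, δ² = 0
    (hδmono : ∀ (a₀ : 𝒜) (l : List 𝒜),
      δ (ι a₀ * (l.map (fun a => δ (ι a))).prod) =
        δ (ι a₀) * (l.map (fun a => δ (ι a))).prod)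
    (hδsq : ∀ x : Ω, δ (δ x) = 0)
    -- the representation π induced by the K-cycle D = [ℳ, ·] on ℂ^N
    (ℳ : Matrix (Fin N) (Fin N) ℂ)
    (π : Ω →ₐ[ℂ] Matrix (Fin N) (Fin N) ℂ)
    (hπinj : Function.Injective (π.comp ι))
    (hπδ : ∀ a : 𝒜, π (δ (ι a)) = ℳ * π (ι a) - π (ι a) * ℳ)
    -- the differential ideal Jᵏ = Kᵏ + δK^{k-1}, Kᵏ = ker π ∩ Ωᵏ𝒜
    (J : ℕ → Submodule ℂ Ω)
    (hJ0 : J 0 = LinearMap.ker π.toLinearMap ⊓ G 0)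
    (hJsucc : ∀ k, J (k + 1) = (LinearMap.ker π.toLinearMap ⊓ G (k + 1)) ⊔
      Submodule.map δ (LinearMap.ker π.toLinearMap ⊓ G k))
    -- the condition [ℳ², π(𝒜)] ⊆ π(J²)
    (hM2 : ∀ a : 𝒜, ℳ ^ 2 * π (ι a) - π (ι a) * ℳ ^ 2 ∈
      (J 2).map π.toLinearMap) :
    ∀ k, 2 ≤ k → (J k).map π.toLinearMap =
      ∑ j ∈ Finset.range (k - 1), (G j * J 2 * G (k - j - 2)).map π.toLinearMap := by
  intro k hk
  set T2 : Submodule ℂ (Matrix (Fin N) (Fin N) ℂ) := (J 2).map π.toLinearMap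
    with hT2
  have hPG : ∀ j : ℕ, (G j).map π.toLinearMap = PG ι ℳ π j := by
    intro j
    rw [hG j, Submodule.map_span, PG]
    congr 1
    ext X
    constructor
    · rintro ⟨x, ⟨a, l, hl, rfl⟩, rfl⟩
      exact ⟨a, l, hl, pi_mon ι δ ℳ π hπδ a l⟩
    · rintro ⟨a, l, hl, rfl⟩
      exact ⟨mon ι δ a l, ⟨a, l, hl, rfl⟩, pi_mon ι δ ℳ π hπδ a l⟩
  have hRHS : ∑ j ∈ Finset.range (k - 1),
      (G j * J 2 * G (k - j - 2)).map π.toLinearMap = SS ι ℳ π T2 k := by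
    rw [SS]
    refine Finset.sum_congr rfl fun j _ => ?_
    rw [Submodule.map_mul, Submodule.map_mul, hPG, hPG, hT2]
  rw [hRHS]
  have hker0 : ∀ {m : ℕ},
      Submodule.map π.toLinearMap (LinearMap.ker π.toLinearMap ⊓ G m) = ⊥ := by
    intro m
    rw [eq_bot_iff]
    rintro x ⟨w, ⟨hw1, _⟩, rfl⟩
    simpa using hw1
  apply le_antisymm
  · -- π(J k) ≤ SS k
    obtain ⟨n, rfl⟩ : ∃ n, k = n + 1 := ⟨k - 1, by omega⟩
    rw [hJsucc n, Submodule.map_sup, hker0]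
    rw [bot_sup_eq]
    rintro x ⟨y, ⟨ω, ⟨hker, hGn⟩, rfl⟩, rfl⟩
    have hC := keyC ι δ ℳ π T2 hδmono hπδ hM2 n (hG n ▸ hGn)
    have h0 : π ω = 0 := hker
    rw [h0] at hC
    simp only [mul_zero, zero_mul, smul_zero, zero_sub, sub_zero] at hC
    have := Submodule.neg_mem _ hC
    simpa using this
  · -- SS k ≤ π(J k)
    apply finsum_le
    intro j hj
    have hjk : j ≤ k - 2 := by simp only [Finset.mem_range] at hj; omega
    rw [hT2, ← hPG, ← hPG, ← Submodule.map_mul, ← Submodule.map_mul]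
    rw [Submodule.map_mul, Submodule.map_mul, Submodule.mul_le]
    intro y hy
    refine Submodule.mul_induction_on
      (C := fun y => ∀ z ∈ (G (k - j - 2)).map π.toLinearMap,
        y * z ∈ (J k).map π.toLinearMap) hy ?_ ?_
    · rintro xu ⟨u, hu, rfl⟩ t ⟨w, hw, rfl⟩ z ⟨v, hv, rfl⟩
      simp only [AlgHom.toLinearMap_apply]
      have hw2 : w ∈ (LinearMap.ker π.toLinearMap ⊓ G 2) ⊔
          Submodule.map δ (LinearMap.ker π.toLinearMap ⊓ G 1) := by
        rw [← hJsucc 1]; exact hw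
      obtain ⟨w₁, hw₁, w₂, hw₂, rfl⟩ := Submodule.mem_sup.mp hw2
      obtain ⟨ω, hω, rfl⟩ := hw₂
      have hπw : π (w₁ + δ ω) = π (δ ω) := by
        have h1 : π w₁ = 0 := hw₁.1
        rw [map_add, h1, zero_add]
      rw [hπw]
      have hωG : ω ∈ G 1 := hω.2
      have hωker : π ω = 0 := hω.1
      have pair1 := pairP ι δ ℳ π hδmono hπδ j 1 (hG j ▸ hu) (hG 1 ▸ hωG)
      obtain ⟨ζ₁, hζ₁, hζ₁p, hζ₁d⟩ :=
        QQ_realize ι δ ℳ π hδmono hπδ (j + 1) pair1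
      have hζ₁p0 : π ζ₁ = 0 := by rw [hζ₁p, hωker, mul_zero]
      have hζ₁d' : π (δ ζ₁) = ((-1 : ℂ) ^ j) • (π u * π (δ ω)) := by
        rw [hζ₁d]
        show π (δ u) * π ω + _ = _
        rw [hωker, mul_zero, zero_add]
      have pair2 := pairP ι δ ℳ π hδmono hπδ (j + 1) (k - j - 2)
        hζ₁ (hG (k - j - 2) ▸ hv)
      obtain ⟨ζ₂, hζ₂, hζ₂p, hζ₂d⟩ :=
        QQ_realize ι δ ℳ π hδmono hπδ (j + 1 + (k - j - 2)) pair2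
      have hζ₂p0 : π ζ₂ = 0 := by rw [hζ₂p, hζ₁p0, zero_mul]
      have hζ₂d' : π (δ ζ₂) = ((-1 : ℂ) ^ j) • (π u * π (δ ω) * π v) := by
        rw [hζ₂d]
        show π (δ ζ₁) * π v + _ = _
        rw [hζ₁d', hζ₁p0, zero_mul, smul_zero, add_zero, smul_mul_assoc]
      set ζ₃ : Ω := ((-1 : ℂ) ^ j) • ζ₂ with hζ₃
      have hζ₃p0 : π ζ₃ = 0 := by
        rw [hζ₃, _root_.map_smul, hζ₂p0, smul_zero]
      have hζ₃d : π (δ ζ₃) = π u * π (δ ω) * π v := by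
        rw [hζ₃, _root_.map_smul, _root_.map_smul, hζ₂d', smul_smul,
          ← mul_pow, neg_mul_neg, one_mul, one_pow, one_smul]
      have hlen : j + 1 + (k - j - 2) = k - 1 := by omega
      have hζ₃G : ζ₃ ∈ G (k - 1) := by
        rw [hG (k - 1)]
        exact Submodule.smul_mem _ _ (hlen ▸ hζ₂)
      have hδζ₃ : δ ζ₃ ∈ J k := by
        have hk1 : k - 1 + 1 = k := by omega
        rw [← hk1, hJsucc (k - 1)]
        exact Submodule.mem_sup_right (Submodule.mem_map_of_mem ⟨hζ₃p0, hζ₃G⟩)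
      exact ⟨δ ζ₃, hδζ₃, hζ₃d⟩
    · intro y₁ y₂ h₁ h₂ z hz
      have e : (y₁ + y₂) * z = y₁ * z + y₂ * z := add_mul _ _ _
      rw [e]
      exact Submodule.add_mem _ (h₁ z hz) (h₂ z hz)
end

section
/- Under the hypotheses of the previous statement (matrix K-cycle with [ℳ², π(𝒜)] ⊆ π(J²)), the induced differential d on Ω_D𝒜 is given by the graded supercommutator: for [ωᵏ] ∈ Ω_Dᵏ𝒜 with representative π(ωᵏ), one has d[ωᵏ] = [ℳ π(ωᵏ) − (−1)ᵏ π(ωᵏ) ℳ]. -/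
open Matrix

/-- Matrix K-cycle: under the hypotheses of the previous statement
([ℳ², π(𝒜)] ⊆ π(J²)), the induced differential d on Ω_D𝒜 = ⊕ₖ π(Ωᵏ𝒜)/π(Jᵏ)
is given by the graded supercommutator: for [ωᵏ] ∈ Ω_Dᵏ𝒜 with representative
π(ωᵏ), one has d[ωᵏ] = [ℳ π(ωᵏ) − (−1)ᵏ π(ωᵏ) ℳ], i.e. the representatives
π(δωᵏ) and ℳ π(ωᵏ) − (−1)ᵏ π(ωᵏ) ℳ agree modulo π(J^{k+1}). -/
theorem differential_is_supercommutator
    (𝒜 Ω : Type*) [Ring 𝒜] [Ring Ω] [Algebra ℂ 𝒜] [Algebra ℂ Ω] (N : ℕ)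
    (ι : 𝒜 →ₐ[ℂ] Ω) (δ : Ω →ₗ[ℂ] Ω)
    -- the ℕ-grading of Ω𝒜, generated by the monomials a₀ δa₁ ⋯ δaₖ
    (G : ℕ → Submodule ℂ Ω)
    (hG : ∀ k, G k = Submodule.span ℂ {x : Ω | ∃ (a₀ : 𝒜) (l : List 𝒜),
      l.length = k ∧ x = ι a₀ * (l.map (fun a => δ (ι a))).prod})
    -- δ is the universal differential: δ(a₀ δa₁ ⋯ δaₖ) = δa₀ δa₁ ⋯ δaₖ, δ² = 0
    (hδmono : ∀ (a₀ : 𝒜) (l : List 𝒜),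
      δ (ι a₀ * (l.map (fun a => δ (ι a))).prod) =
        δ (ι a₀) * (l.map (fun a => δ (ι a))).prod)
    (hδsq : ∀ x : Ω, δ (δ x) = 0)
    -- the representation π induced by the K-cycle D = [ℳ, ·] on ℂ^N
    (ℳ : Matrix (Fin N) (Fin N) ℂ)
    (π : Ω →ₐ[ℂ] Matrix (Fin N) (Fin N) ℂ)
    (hπinj : Function.Injective (π.comp ι))
    (hπδ : ∀ a : 𝒜, π (δ (ι a)) = ℳ * π (ι a) - π (ι a) * ℳ)
    -- the differential ideal Jᵏ = Kᵏ + δK^{k-1}, Kᵏ = ker π ∩ Ωᵏ𝒜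
    (J : ℕ → Submodule ℂ Ω)
    (hJ0 : J 0 = LinearMap.ker π.toLinearMap ⊓ G 0)
    (hJsucc : ∀ k, J (k + 1) = (LinearMap.ker π.toLinearMap ⊓ G (k + 1)) ⊔
      Submodule.map δ (LinearMap.ker π.toLinearMap ⊓ G k))
    -- the condition [ℳ², π(𝒜)] ⊆ π(J²)
    (hM2 : ∀ a : 𝒜, ℳ ^ 2 * π (ι a) - π (ι a) * ℳ ^ 2 ∈
      (J 2).map π.toLinearMap) :
    ∀ (k : ℕ), ∀ ω ∈ G k,
      π (δ ω) - (ℳ * π ω - ((-1 : ℂ) ^ k) • (π ω * ℳ)) ∈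
        (J (k + 1)).map π.toLinearMap := by
  classical
  -- the submodule π(δ(ker π ∩ G k))
  set D : ℕ → Submodule ℂ (Matrix (Fin N) (Fin N) ℂ) :=
    fun k => ((LinearMap.ker π.toLinearMap ⊓ G k).map δ).map π.toLinearMap with hD
  -- membership constructor for D
  have hDmem : ∀ (k : ℕ) (θ : Ω), π θ = 0 → θ ∈ G k → π (δ θ) ∈ D k := by
    intro k θ h1 h2
    exact Submodule.mem_map.2 ⟨δ θ, Submodule.mem_map.2 ⟨θ, ⟨LinearMap.mem_ker.2 h1, h2⟩, rfl⟩, rfl⟩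
  have hDelim : ∀ (k : ℕ) (X : Matrix (Fin N) (Fin N) ℂ), X ∈ D k →
      ∃ θ : Ω, π θ = 0 ∧ θ ∈ G k ∧ π (δ θ) = X := by
    intro k X hX
    obtain ⟨y, hy, rfl⟩ := Submodule.mem_map.1 hX
    obtain ⟨θ, ⟨h1, h2⟩, rfl⟩ := Submodule.mem_map.1 hy
    exact ⟨θ, LinearMap.mem_ker.1 h1, h2, rfl⟩
  -- π(J (k+1)) = D k
  have hJmapD : ∀ k : ℕ, (J (k + 1)).map π.toLinearMap = D k := by
    intro k
    rw [hJsucc k, Submodule.map_sup]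
    have hbot : (LinearMap.ker π.toLinearMap ⊓ G (k + 1)).map π.toLinearMap = ⊥ := by
      rw [eq_bot_iff]
      rintro x ⟨y, ⟨hy1, _⟩, rfl⟩
      simpa using LinearMap.mem_ker.1 hy1
    rw [hbot, bot_sup_eq]
  -- span induction principle for G k
  have spanG : ∀ (k : ℕ) (p : Ω → Prop),
      (∀ (a₀ : 𝒜) (l : List 𝒜), l.length = k →
        p (ι a₀ * (l.map (fun a => δ (ι a))).prod)) →
      p 0 → (∀ x y, p x → p y → p (x + y)) → (∀ (c : ℂ) (x : Ω), p x → p (c • x)) →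
      ∀ x ∈ G k, p x := by
    intro k p hmem h0 hadd hsmul x hx
    rw [hG k] at hx
    refine Submodule.span_induction ?_ h0 (fun a b _ _ ha hb => hadd a b ha hb)
      (fun c a _ ha => hsmul c a ha) hx
    rintro y ⟨a₀, l, hl, rfl⟩
    exact hmem a₀ l hl
  -- monomials are in G
  have hmonoG : ∀ (a₀ : 𝒜) (l : List 𝒜),
      ι a₀ * (l.map (fun a => δ (ι a))).prod ∈ G l.length := by
    intro a₀ l
    rw [hG]
    exact Submodule.subset_span ⟨a₀, l, rfl, rfl⟩
  -- left multiplication by ι a preserves G k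
  have hmulG : ∀ (a : 𝒜) (k : ℕ) (x : Ω), x ∈ G k → ι a * x ∈ G k := by
    intro a k x hx
    refine spanG k (fun x => ι a * x ∈ G k) ?_ ?_ ?_ ?_ x hx
    · intro b₀ l hl
      rw [← mul_assoc, ← _root_.map_mul]
      exact hl ▸ hmonoG (a * b₀) l
    · simp
    · intro x y hx hy; rw [mul_add]; exact add_mem hx hy
    · intro c x hx; rw [mul_smul_comm]; exact Submodule.smul_mem _ _ hx
  -- δ maps G k into G (k+1)
  have hδG : ∀ (k : ℕ) (x : Ω), x ∈ G k → δ x ∈ G (k + 1) := by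
    intro k x hx
    refine spanG k (fun x => δ x ∈ G (k + 1)) ?_ ?_ ?_ ?_ x hx
    · intro b₀ l hl
      rw [hδmono]
      have := hmonoG 1 (b₀ :: l)
      simp only [List.map_cons, List.prod_cons, List.length_cons, _root_.map_one, one_mul] at this
      exact hl ▸ this
    · simp
    · intro x y hx hy; rw [_root_.map_add]; exact add_mem hx hy
    · intro c x hx; rw [_root_.map_smul]; exact Submodule.smul_mem _ _ hx
  -- π ∘ δ on products ι a * x, x ∈ G k
  have hπδmul : ∀ (a : 𝒜) (k : ℕ) (x : Ω), x ∈ G k →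
      π (δ (ι a * x)) = π (δ (ι a)) * π x + π (ι a) * π (δ x) := by
    intro a k x hx
    refine spanG k (fun x => π (δ (ι a * x)) = π (δ (ι a)) * π x + π (ι a) * π (δ x))
      ?_ ?_ ?_ ?_ x hx
    · intro b₀ l hl
      have hm : π (ι (a * b₀)) = π (ι a) * π (ι b₀) := by
        rw [_root_.map_mul ι, _root_.map_mul]
      calc π (δ (ι a * (ι b₀ * (l.map (fun a => δ (ι a))).prod)))
          = π (δ (ι (a * b₀))) * π ((l.map (fun a => δ (ι a))).prod) := by
            rw [← mul_assoc, ← _root_.map_mul ι, hδmono, _root_.map_mul]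
        _ = (ℳ * (π (ι a) * π (ι b₀)) - (π (ι a) * π (ι b₀)) * ℳ)
              * π ((l.map (fun a => δ (ι a))).prod) := by
            rw [hπδ, hm]
        _ = π (δ (ι a)) * π (ι b₀ * (l.map (fun a => δ (ι a))).prod)
            + π (ι a) * π (δ (ι b₀ * (l.map (fun a => δ (ι a))).prod)) := by
            rw [hδmono]
            simp only [_root_.map_mul, hπδ]
            noncomm_ring
    · simp
    · intro x y hx hy
      simp only [mul_add, _root_.map_add, hx, hy]
      abel
    · intro c x hx
      simp only [mul_smul_comm, _root_.map_smul, hx, smul_add, mul_smul_comm]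
  -- δ of x * δ(ι a), x ∈ G k
  have hδmulδ : ∀ (a : 𝒜) (k : ℕ) (x : Ω), x ∈ G k →
      δ (x * δ (ι a)) = δ x * δ (ι a) := by
    intro a k x hx
    refine spanG k (fun x => δ (x * δ (ι a)) = δ x * δ (ι a)) ?_ ?_ ?_ ?_ x hx
    · intro b₀ l hl
      have hprod : (ι b₀ * (l.map (fun a => δ (ι a))).prod) * δ (ι a)
          = ι b₀ * ((l ++ [a]).map (fun a => δ (ι a))).prod := by
        rw [List.map_append, List.prod_append, mul_assoc]
        simp
      rw [hprod, hδmono, hδmono, List.map_append, List.prod_append, mul_assoc]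
      simp
    · simp
    · intro x y hx hy
      rw [add_mul, _root_.map_add, _root_.map_add, add_mul, hx, hy]
    · intro c x hx
      rw [smul_mul_assoc, _root_.map_smul, _root_.map_smul, smul_mul_assoc, hx]
  -- right multiplication by δ(ι a) maps G k to G (k+1)
  have hmulGδ : ∀ (a : 𝒜) (k : ℕ) (x : Ω), x ∈ G k → x * δ (ι a) ∈ G (k + 1) := by
    intro a k x hx
    refine spanG k (fun x => x * δ (ι a) ∈ G (k + 1)) ?_ ?_ ?_ ?_ x hx
    · intro b₀ l hl
      have hprod : (ι b₀ * (l.map (fun a => δ (ι a))).prod) * δ (ι a)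
          = ι b₀ * ((l ++ [a]).map (fun a => δ (ι a))).prod := by
        rw [List.map_append, List.prod_append, mul_assoc]
        simp
      rw [hprod]
      have := hmonoG b₀ (l ++ [a])
      simpa [hl] using this
    · simp
    · intro x y hx hy; rw [add_mul]; exact add_mem hx hy
    · intro c x hx; rw [smul_mul_assoc]; exact Submodule.smul_mem _ _ hx
  -- Lemma A: left multiplication by π(ι a) preserves D k
  have lemA : ∀ (a : 𝒜) (k : ℕ) (X : Matrix (Fin N) (Fin N) ℂ), X ∈ D k →
      π (ι a) * X ∈ D k := by
    intro a k X hX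
    obtain ⟨θ, h1, h2, rfl⟩ := hDelim k X hX
    have key : π (δ (ι a * θ)) = π (ι a) * π (δ θ) := by
      rw [hπδmul a k θ h2, h1, mul_zero, zero_add]
    have := hDmem k (ι a * θ) (by rw [_root_.map_mul, h1, mul_zero]) (hmulG a k θ h2)
    rwa [key] at this
  -- Lemma B: right multiplication by π(δ(ι a)) maps D k to D (k+1)
  have lemB : ∀ (a : 𝒜) (k : ℕ) (X : Matrix (Fin N) (Fin N) ℂ), X ∈ D k →
      X * π (δ (ι a)) ∈ D (k + 1) := by
    intro a k X hX
    obtain ⟨θ, h1, h2, rfl⟩ := hDelim k X hX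
    have key : π (δ (θ * δ (ι a))) = π (δ θ) * π (δ (ι a)) := by
      rw [hδmulδ a k θ h2, _root_.map_mul]
    have := hDmem (k + 1) (θ * δ (ι a)) (by rw [_root_.map_mul, h1, zero_mul]) (hmulGδ a k θ h2)
    rwa [key] at this
  -- Lemma C: left multiplication by π(δ(ι a)) maps D k to D (k+1)
  have lemC : ∀ (a : 𝒜) (k : ℕ) (X : Matrix (Fin N) (Fin N) ℂ), X ∈ D k →
      π (δ (ι a)) * X ∈ D (k + 1) := by
    intro a k X hX
    obtain ⟨θ, h1, h2, h3⟩ := hDelim k X hX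
    obtain ⟨θ₂, g1, g2, g3⟩ := hDelim k _ (lemA a k X hX)
    have hφG : ι a * δ θ - δ θ₂ ∈ G (k + 1) :=
      sub_mem (hmulG a (k + 1) (δ θ) (hδG k θ h2)) (hδG k θ₂ g2)
    have hφker : π (ι a * δ θ - δ θ₂) = 0 := by
      rw [_root_.map_sub, _root_.map_mul, h3, g3]; exact sub_self _
    have hφδ : π (δ (ι a * δ θ - δ θ₂)) = π (δ (ι a)) * X := by
      rw [_root_.map_sub, _root_.map_sub, hπδmul a (k + 1) (δ θ) (hδG k θ h2), hδsq, hδsq, h3]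
      simp
    have := hDmem (k + 1) _ hφker hφG
    rwa [hφδ] at this
  -- Lemma M: [ℳ², π(ι a)] ∈ D 1
  have lemM : ∀ a : 𝒜, ℳ ^ 2 * π (ι a) - π (ι a) * ℳ ^ 2 ∈ D 1 := by
    intro a
    have := hM2 a
    rwa [show (2 : ℕ) = 1 + 1 from rfl, hJmapD 1] at this
  -- right multiplication by a product of δ's
  have lemBlist : ∀ (l : List 𝒜) (k : ℕ) (X : Matrix (Fin N) (Fin N) ℂ), X ∈ D k →
      X * π ((l.map (fun a => δ (ι a))).prod) ∈ D (k + l.length) := by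
    intro l
    induction l with
    | nil => intro k X hX; simpa using hX
    | cons b rest ih =>
      intro k X hX
      have h1 : X * π (((b :: rest).map (fun a => δ (ι a))).prod)
          = (X * π (δ (ι b))) * π ((rest.map (fun a => δ (ι a))).prod) := by
        simp [mul_assoc]
      rw [h1]
      have := ih (k + 1) _ (lemB b k X hX)
      have hlen : k + 1 + rest.length = k + (b :: rest).length := by
        simp [List.length_cons]; ring
      rwa [hlen] at this
  -- Lemma T: the supercommutator defect of δx lies in D (k+1)
  have lemT : ∀ (k : ℕ) (x : Ω), x ∈ G k →
      ℳ * π (δ x) + ((-1 : ℂ) ^ k) • (π (δ x) * ℳ) ∈ D (k + 1) := by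
    intro k
    induction k with
    | zero =>
      intro x hx
      refine spanG 0 (fun x => ℳ * π (δ x) + ((-1 : ℂ) ^ 0) • (π (δ x) * ℳ) ∈ D 1)
        ?_ ?_ ?_ ?_ x hx
      · intro b₀ l hl
        rw [List.length_eq_zero_iff] at hl
        subst hl
        simp only [List.map_nil, List.prod_nil, mul_one, hδmono b₀ [], pow_zero, one_smul]
        simp only [List.map_nil, List.prod_nil, mul_one, hπδ]
        have : ℳ * (ℳ * π (ι b₀) - π (ι b₀) * ℳ) + (ℳ * π (ι b₀) - π (ι b₀) * ℳ) * ℳ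
            = ℳ ^ 2 * π (ι b₀) - π (ι b₀) * ℳ ^ 2 := by noncomm_ring
        rw [this]
        exact lemM b₀
      · simp
      · intro x y hx hy
        have : ℳ * π (δ (x + y)) + ((-1 : ℂ) ^ 0) • (π (δ (x + y)) * ℳ)
            = (ℳ * π (δ x) + ((-1 : ℂ) ^ 0) • (π (δ x) * ℳ))
              + (ℳ * π (δ y) + ((-1 : ℂ) ^ 0) • (π (δ y) * ℳ)) := by
          simp only [_root_.map_add, smul_add, mul_add, add_mul]; abel
        rw [this]; exact add_mem hx hy
      · intro c x hx
        have : ℳ * π (δ (c • x)) + ((-1 : ℂ) ^ 0) • (π (δ (c • x)) * ℳ)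
            = c • (ℳ * π (δ x) + ((-1 : ℂ) ^ 0) • (π (δ x) * ℳ)) := by
          simp only [_root_.map_smul, smul_add, mul_smul_comm, smul_mul_assoc, smul_comm c]
        rw [this]; exact Submodule.smul_mem _ _ hx
    | succ k ih =>
      intro x hx
      refine spanG (k + 1)
        (fun x => ℳ * π (δ x) + ((-1 : ℂ) ^ (k + 1)) • (π (δ x) * ℳ) ∈ D (k + 2))
        ?_ ?_ ?_ ?_ x hx
      · intro a₀ l hl
        obtain ⟨b, rest, rfl⟩ : ∃ b rest, l = b :: rest := by
          cases l with
          | nil => simp at hl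
          | cons b rest => exact ⟨b, rest, rfl⟩
        have hrest : rest.length = k := by simpa using hl
        -- m' = ι b * prod rest ∈ G k
        have hm' : ι b * (rest.map (fun a => δ (ι a))).prod ∈ G k :=
          hrest ▸ hmonoG b rest
        set V : Matrix (Fin N) (Fin N) ℂ :=
          π (δ (ι b * (rest.map (fun a => δ (ι a))).prod)) with hV
        have hδm' : δ (ι b * (rest.map (fun a => δ (ι a))).prod)
            = ((b :: rest).map (fun a => δ (ι a))).prod := by
          rw [hδmono]; simp
        have hδx : π (δ (ι a₀ * ((b :: rest).map (fun a => δ (ι a))).prod))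
            = π (δ (ι a₀)) * V := by
          rw [hδmono, _root_.map_mul, hV, hδm']
        have key : ℳ * (π (δ (ι a₀)) * V) + ((-1 : ℂ) ^ (k + 1)) • ((π (δ (ι a₀)) * V) * ℳ)
            = (ℳ ^ 2 * π (ι a₀) - π (ι a₀) * ℳ ^ 2) * V
              - π (δ (ι a₀)) * (ℳ * V + ((-1 : ℂ) ^ k) • (V * ℳ)) := by
          rw [hπδ a₀, pow_succ]
          simp only [mul_smul_comm, smul_mul_assoc, mul_add, mul_sub, sub_mul, add_mul,
            smul_sub, smul_add, mul_assoc, mul_neg_one, neg_smul, mul_one]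
          noncomm_ring
        rw [hδx, key]
        refine sub_mem ?_ ?_
        · have h1 : (ℳ ^ 2 * π (ι a₀) - π (ι a₀) * ℳ ^ 2) *
              π (((b :: rest).map (fun a => δ (ι a))).prod) ∈ D (1 + (b :: rest).length) :=
            lemBlist (b :: rest) 1 _ (lemM a₀)
          have h2 : 1 + (b :: rest).length = k + 2 := by simp [hrest]; ring
          rw [← hδm', ← hV] at h1
          rwa [h2] at h1
        · exact lemC a₀ (k + 1) _ (ih _ hm')
      · simp
      · intro x y hx hy
        have : ℳ * π (δ (x + y)) + ((-1 : ℂ) ^ (k + 1)) • (π (δ (x + y)) * ℳ)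
            = (ℳ * π (δ x) + ((-1 : ℂ) ^ (k + 1)) • (π (δ x) * ℳ))
              + (ℳ * π (δ y) + ((-1 : ℂ) ^ (k + 1)) • (π (δ y) * ℳ)) := by
          simp only [_root_.map_add, smul_add, mul_add, add_mul]; abel
        rw [this]; exact add_mem hx hy
      · intro c x hx
        have : ℳ * π (δ (c • x)) + ((-1 : ℂ) ^ (k + 1)) • (π (δ (c • x)) * ℳ)
            = c • (ℳ * π (δ x) + ((-1 : ℂ) ^ (k + 1)) • (π (δ x) * ℳ)) := by
          simp only [_root_.map_smul, smul_add, mul_smul_comm, smul_mul_assoc, smul_comm c]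
        rw [this]; exact Submodule.smul_mem _ _ hx
  -- main statement
  intro k ω hω
  rw [hJmapD k]
  cases k with
  | zero =>
    refine spanG 0
      (fun ω => π (δ ω) - (ℳ * π ω - ((-1 : ℂ) ^ 0) • (π ω * ℳ)) ∈ D 0) ?_ ?_ ?_ ?_ ω hω
    · intro a₀ l hl
      rw [List.length_eq_zero_iff] at hl
      subst hl
      simp only [List.map_nil, List.prod_nil, mul_one, hδmono a₀ [], pow_zero, one_smul]
      simp only [List.map_nil, List.prod_nil, mul_one, hπδ]
      simp only [sub_sub_cancel, sub_self]
      exact zero_mem _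
    · simp
    · intro x y hx hy
      have : π (δ (x + y)) - (ℳ * π (x + y) - ((-1 : ℂ) ^ 0) • (π (x + y) * ℳ))
          = (π (δ x) - (ℳ * π x - ((-1 : ℂ) ^ 0) • (π x * ℳ)))
            + (π (δ y) - (ℳ * π y - ((-1 : ℂ) ^ 0) • (π y * ℳ))) := by
        simp only [_root_.map_add, smul_add, mul_add, add_mul]; abel
      rw [this]; exact add_mem hx hy
    · intro c x hx
      have : π (δ (c • x)) - (ℳ * π (c • x) - ((-1 : ℂ) ^ 0) • (π (c • x) * ℳ))
          = c • (π (δ x) - (ℳ * π x - ((-1 : ℂ) ^ 0) • (π x * ℳ))) := by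
        simp only [_root_.map_smul, smul_sub, mul_smul_comm, smul_mul_assoc, smul_comm c]
      rw [this]; exact Submodule.smul_mem _ _ hx
  | succ k =>
    refine spanG (k + 1)
      (fun ω => π (δ ω) - (ℳ * π ω - ((-1 : ℂ) ^ (k + 1)) • (π ω * ℳ)) ∈ D (k + 1))
      ?_ ?_ ?_ ?_ ω hω
    · intro a₀ l hl
      obtain ⟨b, rest, rfl⟩ : ∃ b rest, l = b :: rest := by
        cases l with
        | nil => simp at hl
        | cons b rest => exact ⟨b, rest, rfl⟩
      have hrest : rest.length = k := by simpa using hl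
      have hm' : ι b * (rest.map (fun a => δ (ι a))).prod ∈ G k :=
        hrest ▸ hmonoG b rest
      set V : Matrix (Fin N) (Fin N) ℂ :=
        π (δ (ι b * (rest.map (fun a => δ (ι a))).prod)) with hV
      have hδm' : δ (ι b * (rest.map (fun a => δ (ι a))).prod)
          = ((b :: rest).map (fun a => δ (ι a))).prod := by
        rw [hδmono]; simp
      have hδx : π (δ (ι a₀ * ((b :: rest).map (fun a => δ (ι a))).prod))
          = π (δ (ι a₀)) * V := by
        rw [hδmono, _root_.map_mul, hV, hδm']
      have hπx : π (ι a₀ * ((b :: rest).map (fun a => δ (ι a))).prod) = π (ι a₀) * V := by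
        rw [_root_.map_mul, hV, hδm']
      rw [hδx, hπx]
      have key : π (δ (ι a₀)) * V - (ℳ * (π (ι a₀) * V)
            - ((-1 : ℂ) ^ (k + 1)) • ((π (ι a₀) * V) * ℳ))
          = -(π (ι a₀) * (ℳ * V + ((-1 : ℂ) ^ k) • (V * ℳ))) := by
        rw [hπδ a₀, pow_succ]
        simp only [mul_smul_comm, smul_mul_assoc, mul_add, mul_sub, sub_mul, add_mul,
          smul_sub, smul_add, mul_assoc, mul_neg_one, neg_smul, mul_one]
        noncomm_ring
      rw [key]
      exact neg_mem (lemA a₀ (k + 1) _ (lemT k _ hm'))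
    · simp
    · intro x y hx hy
      have : π (δ (x + y)) - (ℳ * π (x + y) - ((-1 : ℂ) ^ (k + 1)) • (π (x + y) * ℳ))
          = (π (δ x) - (ℳ * π x - ((-1 : ℂ) ^ (k + 1)) • (π x * ℳ)))
            + (π (δ y) - (ℳ * π y - ((-1 : ℂ) ^ (k + 1)) • (π y * ℳ))) := by
        simp only [_root_.map_add, smul_add, mul_add, add_mul]; abel
      rw [this]; exact add_mem hx hy
    · intro c x hx
      have : π (δ (c • x)) - (ℳ * π (c • x) - ((-1 : ℂ) ^ (k + 1)) • (π (c • x) * ℳ))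
          = c • (π (δ x) - (ℳ * π x - ((-1 : ℂ) ^ (k + 1)) • (π x * ℳ))) := by
        simp only [_root_.map_smul, smul_sub, mul_smul_comm, smul_mul_assoc, smul_comm c]
      rw [this]; exact Submodule.smul_mem _ _ hx
end

section
/- Let ℳ be the off-diagonal matrix with blocks μ ∈ ℂ^{n×m}, μ* ∈ ℂ^{m×n}. The set {A[μ*μ, B]C : A, B, C ∈ M_m(ℂ)} spans all of M_m(ℂ) if μ*μ is not a scalar multiple of the identity, and equals {0} if μ*μ is a scalar multiple of the identity. -/
open Matrix

lemma stdBasis_sandwich {m : ℕ} (D : Matrix (Fin m) (Fin m) ℂ) (k l i j : Fin m)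
    (hD : D k l ≠ 0) (x : ℂ) :
    single i k 1 * D * single l j ((D k l)⁻¹ * x) =
      single i j x := by
  ext a b
  by_cases ha : a = i
  · subst ha
    by_cases hb : b = j
    · subst hb
      simp [mul_apply, single, Finset.sum_ite_eq, Finset.sum_ite_eq',
        mul_comm, mul_assoc, inv_mul_cancel₀ hD]
      field_simp
    · rw [mul_single_apply_of_ne (hbj := hb),
        single_apply_of_col_ne _ _ (Ne.symm hb)]
  · rw [Matrix.mul_assoc, single_mul_apply_of_ne (h := ha),
      single_apply_of_row_ne (Ne.symm ha)]

/-- The set {A[μ*μ, B]C : A, B, C ∈ M_m(ℂ)} spans all of M_m(ℂ) if μ*μ is not a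
scalar multiple of the identity, and equals {0} (span is ⊥) if μ*μ is a scalar
multiple of the identity. Here μ is a nonzero complex n×m matrix and μ* its
conjugate transpose. -/
theorem span_commutator_mu_star_mu (n m : ℕ) (μ : Matrix (Fin n) (Fin m) ℂ)
    (hμ : μ ≠ 0) :
    ((¬ ∃ c : ℂ, μ.conjTranspose * μ = c • (1 : Matrix (Fin m) (Fin m) ℂ)) →
      Submodule.span ℂ {X : Matrix (Fin m) (Fin m) ℂ |
        ∃ A B C : Matrix (Fin m) (Fin m) ℂ,
          X = A * (μ.conjTranspose * μ * B - B * (μ.conjTranspose * μ)) * C} = ⊤) ∧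
    ((∃ c : ℂ, μ.conjTranspose * μ = c • (1 : Matrix (Fin m) (Fin m) ℂ)) →
      Submodule.span ℂ {X : Matrix (Fin m) (Fin m) ℂ |
        ∃ A B C : Matrix (Fin m) (Fin m) ℂ,
          X = A * (μ.conjTranspose * μ * B - B * (μ.conjTranspose * μ)) * C} = ⊥) := by
  set M := μ.conjTranspose * μ with hM
  constructor
  · intro hns
    -- M is not in the range of scalar, so some B does not commute with M
    have hB : ∃ B : Matrix (Fin m) (Fin m) ℂ, M * B - B * M ≠ 0 := by
      by_contra h
      push_neg at h
      apply hns
      have hcomm : ∀ B : Matrix (Fin m) (Fin m) ℂ, Commute B M := by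
        intro B
        have := h B
        rw [sub_eq_zero] at this
        exact this.symm
      have : M ∈ Set.range (Matrix.scalar (Fin m)) :=
        mem_range_scalar_of_commute_single (fun i j _ => hcomm _)
      obtain ⟨c, hc⟩ := this
      exact ⟨c, by rw [← hc]; simp [Matrix.scalar_apply, Matrix.smul_one_eq_diagonal]⟩
    obtain ⟨B, hB⟩ := hB
    set D := M * B - B * M with hD
    obtain ⟨k, l, hkl⟩ : ∃ k l, D k l ≠ 0 := by
      by_contra h
      push_neg at h
      exact hB (Matrix.ext h)
    rw [eq_top_iff]
    rintro X -
    induction X using Matrix.induction_on' with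
    | h_zero => exact Submodule.zero_mem _
    | h_add p q hp hq => exact Submodule.add_mem _ hp hq
    | h_std_basis i j x =>
      apply Submodule.subset_span
      exact ⟨single i k 1, B, single l j ((D k l)⁻¹ * x),
        (stdBasis_sandwich D k l i j hkl x).symm⟩
  · rintro ⟨c, hc⟩
    rw [Submodule.span_eq_bot]
    rintro X ⟨A, B, C, rfl⟩
    rw [hc]
    simp [smul_mul_assoc, mul_smul_comm]
end

section
/- For 𝒜 = M_m(ℂ) ⊕ M_m(ℂ) represented block-diagonally on ℂ^{2m} with off-diagonal Dirac matrix ℳ = [[0, μ*],[μ, 0]] satisfying μ*μ = λ·1 and μμ* = λ·1 for some λ > 0, the differential ideal J is zero, and consequently Ω_D^{2k}𝒜 consists of all block-diagonal matrices diag(a, b) with a, b ∈ M_m(ℂ), while Ω_D^{2k+1}𝒜 consists of all block-off-diagonal matrices, for every k ∈ ℕ. -/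
open Matrix

noncomputable section

variable (m : ℕ)

/-- The algebra 𝒜 = M_m(ℂ) ⊕ M_m(ℂ). -/
abbrev TwoPtAlg (m : ℕ) := Matrix (Fin m) (Fin m) ℂ × Matrix (Fin m) (Fin m) ℂ

/-- The block-diagonal representation π(a, b) = diag(a, b) on ℂ^{2m}. -/
def piRep (p : TwoPtAlg m) : Matrix (Fin m ⊕ Fin m) (Fin m ⊕ Fin m) ℂ :=
  Matrix.fromBlocks p.1 0 0 p.2

/-- The off-diagonal Dirac matrix ℳ = [[0, μ*],[μ, 0]]. -/
def diracM (μ : Matrix (Fin m) (Fin m) ℂ) : Matrix (Fin m ⊕ Fin m) (Fin m ⊕ Fin m) ℂ :=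
  Matrix.fromBlocks 0 μ.conjTranspose μ 0

/-- The represented one-form [ℳ, π(a)]. -/
def commM (μ : Matrix (Fin m) (Fin m) ℂ) (a : TwoPtAlg m) :
    Matrix (Fin m ⊕ Fin m) (Fin m ⊕ Fin m) ℂ :=
  diracM m μ * piRep m a - piRep m a * diracM m μ

lemma commM_eq (μ : Matrix (Fin m) (Fin m) ℂ) (a : TwoPtAlg m) :
    commM m μ a = Matrix.fromBlocks 0 (μ.conjTranspose * a.2 - a.1 * μ.conjTranspose)
      (μ * a.1 - a.2 * μ) 0 := by
  simp only [commM, diracM, piRep, Matrix.fromBlocks_multiply, Matrix.mul_zero,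
    Matrix.zero_mul, add_zero, zero_add, sub_eq_add_neg, Matrix.fromBlocks_neg,
    Matrix.fromBlocks_add, neg_zero]

lemma diracM_sq (μ : Matrix (Fin m) (Fin m) ℂ) (lam : ℝ)
    (h1 : μ.conjTranspose * μ = (lam : ℂ) • (1 : Matrix (Fin m) (Fin m) ℂ))
    (h2 : μ * μ.conjTranspose = (lam : ℂ) • (1 : Matrix (Fin m) (Fin m) ℂ)) :
    diracM m μ * diracM m μ = (lam : ℂ) • 1 := by
  simp only [diracM, Matrix.fromBlocks_multiply, Matrix.mul_zero, Matrix.zero_mul,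
    add_zero, zero_add, h1, h2]
  rw [← Matrix.fromBlocks_one, Matrix.fromBlocks_smul, smul_zero]

lemma anti_aux {R : Type*} [Ring R] {c : R} (M P : R) (hc : ∀ x : R, c * x = x * c)
    (hM : M * M = c) : M * (M * P - P * M) + (M * P - P * M) * M = 0 := by
  have e1 : M * (M * P - P * M) = (M * M) * P - M * P * M := by noncomm_ring
  have e2 : (M * P - P * M) * M = M * P * M - P * (M * M) := by noncomm_ring
  rw [e1, e2, hM, hc P]
  abel

lemma anti (μ : Matrix (Fin m) (Fin m) ℂ) (lam : ℝ)
    (h1 : μ.conjTranspose * μ = (lam : ℂ) • (1 : Matrix (Fin m) (Fin m) ℂ))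
    (h2 : μ * μ.conjTranspose = (lam : ℂ) • (1 : Matrix (Fin m) (Fin m) ℂ))
    (a : TwoPtAlg m) :
    diracM m μ * commM m μ a = -(commM m μ a * diracM m μ) := by
  have h := anti_aux (c := (lam : ℂ) • (1 : Matrix (Fin m ⊕ Fin m) (Fin m ⊕ Fin m) ℂ))
    (diracM m μ) (piRep m a) (fun x => by simp [smul_mul_assoc, mul_smul_comm])
    (diracM_sq m μ lam h1 h2)
  rw [commM]
  linear_combination (norm := noncomm_ring) h

lemma prodAnti (μ : Matrix (Fin m) (Fin m) ℂ) (lam : ℝ)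
    (h1 : μ.conjTranspose * μ = (lam : ℂ) • (1 : Matrix (Fin m) (Fin m) ℂ))
    (h2 : μ * μ.conjTranspose = (lam : ℂ) • (1 : Matrix (Fin m) (Fin m) ℂ)) :
    ∀ l : List (TwoPtAlg m),
      diracM m μ * (l.map (commM m μ)).prod =
        ((-1 : ℂ) ^ l.length) • ((l.map (commM m μ)).prod * diracM m μ) := by
  intro l
  induction l with
  | nil => simp
  | cons a l ih =>
    simp only [List.map_cons, List.prod_cons, List.length_cons]
    rw [← mul_assoc, anti m μ lam h1 h2 a, neg_mul, mul_assoc, ih]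
    rw [mul_smul_comm]
    simp [pow_succ, mul_smul, mul_assoc]

/-- π(Ωᵏ𝒜): the span of the monomials π(a₀)[ℳ,π(a₁)]⋯[ℳ,π(aₖ)]. -/
def piOmega (μ : Matrix (Fin m) (Fin m) ℂ) (k : ℕ) :
    Submodule ℂ (Matrix (Fin m ⊕ Fin m) (Fin m ⊕ Fin m) ℂ) :=
  Submodule.span ℂ {x | ∃ (a₀ : TwoPtAlg m) (l : List (TwoPtAlg m)), l.length = k ∧
    x = piRep m a₀ * (l.map (commM m μ)).prod}

/-- π(Jᵏ) = π(δ K^{k-1}) (π(Kᵏ) contributes 0): the span of the elements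
[ℳ,π(a₁ʳ)]⋯[ℳ,π(aₖʳ)] summed over r, where the corresponding sum
Σᵣ π(a₀ʳ)[ℳ,π(a₁ʳ)]⋯[ℳ,π(a_{k-1}ʳ)] of degree-(k-1) monomials vanishes. -/
def piJ (μ : Matrix (Fin m) (Fin m) ℂ) : ℕ → Submodule ℂ
    (Matrix (Fin m ⊕ Fin m) (Fin m ⊕ Fin m) ℂ)
  | 0 => ⊥
  | (k + 1) => Submodule.span ℂ {x | ∃ (s : ℕ) (a : Fin s → TwoPtAlg m)
      (l : Fin s → List (TwoPtAlg m)), (∀ r, (l r).length = k) ∧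
      (∑ r, piRep m (a r) * ((l r).map (commM m μ)).prod) = 0 ∧
      x = ∑ r, commM m μ (a r) * ((l r).map (commM m μ)).prod}

lemma prod_shape (μ : Matrix (Fin m) (Fin m) ℂ) :
    ∀ l : List (TwoPtAlg m),
      (Even l.length → ∃ a b, (l.map (commM m μ)).prod = Matrix.fromBlocks a 0 0 b) ∧
      (¬ Even l.length → ∃ a b, (l.map (commM m μ)).prod = Matrix.fromBlocks 0 a b 0) := by
  intro l
  induction l with
  | nil =>
    refine ⟨fun _ => ⟨1, 1, by simp [Matrix.fromBlocks_one]⟩, fun h => ?_⟩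
    simp at h
  | cons c l ih =>
    simp only [List.map_cons, List.prod_cons, List.length_cons]
    rw [commM_eq]
    constructor
    · intro h
      have hl : ¬ Even l.length := by
        rw [Nat.even_add_one] at h; exact h
      obtain ⟨a, b, hab⟩ := ih.2 hl
      rw [hab]
      exact ⟨(μ.conjTranspose * c.2 - c.1 * μ.conjTranspose) * b,
        (μ * c.1 - c.2 * μ) * a, by simp [Matrix.fromBlocks_multiply]⟩
    · intro h
      have hl : Even l.length := by
        rw [Nat.even_add_one, not_not] at h; exact h
      obtain ⟨a, b, hab⟩ := ih.1 hl
      rw [hab]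
      exact ⟨(μ.conjTranspose * c.2 - c.1 * μ.conjTranspose) * b,
        (μ * c.1 - c.2 * μ) * a, by simp [Matrix.fromBlocks_multiply]⟩

lemma commM_e (μ : Matrix (Fin m) (Fin m) ℂ) :
    commM m μ ((1 : Matrix (Fin m) (Fin m) ℂ), (0 : Matrix (Fin m) (Fin m) ℂ)) =
      Matrix.fromBlocks 0 (-μ.conjTranspose) μ 0 := by
  rw [commM_eq]; simp

lemma commM_f (μ : Matrix (Fin m) (Fin m) ℂ) :
    commM m μ ((0 : Matrix (Fin m) (Fin m) ℂ), (1 : Matrix (Fin m) (Fin m) ℂ)) =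
      Matrix.fromBlocks 0 μ.conjTranspose (-μ) 0 := by
  rw [commM_eq]; simp

lemma prod_replicate_e (μ : Matrix (Fin m) (Fin m) ℂ) (lam : ℝ)
    (h1 : μ.conjTranspose * μ = (lam : ℂ) • (1 : Matrix (Fin m) (Fin m) ℂ))
    (h2 : μ * μ.conjTranspose = (lam : ℂ) • (1 : Matrix (Fin m) (Fin m) ℂ)) (k : ℕ) :
    ((List.replicate (2 * k) ((1 : Matrix (Fin m) (Fin m) ℂ),
        (0 : Matrix (Fin m) (Fin m) ℂ))).map (commM m μ)).prod =
      ((-(lam : ℂ)) ^ k) • 1 := by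
  rw [List.map_replicate, List.prod_replicate, commM_e]
  have hsq : (Matrix.fromBlocks 0 (-μ.conjTranspose) μ 0 :
      Matrix (Fin m ⊕ Fin m) (Fin m ⊕ Fin m) ℂ) ^ 2 = (-(lam : ℂ)) • 1 := by
    rw [sq]
    simp only [Matrix.fromBlocks_multiply, Matrix.mul_zero, Matrix.zero_mul, add_zero,
      zero_add, Matrix.neg_mul, Matrix.mul_neg, h1, h2]
    rw [← Matrix.fromBlocks_one, Matrix.fromBlocks_smul]
    simp [neg_smul, smul_zero]
  rw [pow_mul, hsq, smul_pow, one_pow]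

lemma piRep_mul_diag (p : TwoPtAlg m) (a b : Matrix (Fin m) (Fin m) ℂ) :
    piRep m p * Matrix.fromBlocks a 0 0 b = Matrix.fromBlocks (p.1 * a) 0 0 (p.2 * b) := by
  simp [piRep, Matrix.fromBlocks_multiply]

lemma piRep_mul_off (p : TwoPtAlg m) (a b : Matrix (Fin m) (Fin m) ℂ) :
    piRep m p * Matrix.fromBlocks 0 a b 0 = Matrix.fromBlocks 0 (p.1 * a) (p.2 * b) 0 := by
  simp [piRep, Matrix.fromBlocks_multiply]

/-- Two-point case i: if μ*μ = λ·1 and μμ* = λ·1 with λ > 0, then the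
differential ideal J is zero (π(Jᵏ) = 0 for all k), Ω_D^{2k}𝒜 = π(Ω^{2k}𝒜)
consists of all block-diagonal matrices, and Ω_D^{2k+1}𝒜 = π(Ω^{2k+1}𝒜)
consists of all block-off-diagonal matrices. -/
theorem two_point_case_i (μ : Matrix (Fin m) (Fin m) ℂ) (lam : ℝ) (hlam : 0 < lam)
    (h1 : μ.conjTranspose * μ = (lam : ℂ) • (1 : Matrix (Fin m) (Fin m) ℂ))
    (h2 : μ * μ.conjTranspose = (lam : ℂ) • (1 : Matrix (Fin m) (Fin m) ℂ)) :
    (∀ k : ℕ, piJ m μ k = ⊥) ∧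
    (∀ k : ℕ, piOmega m μ (2 * k) =
      Submodule.span ℂ {x | ∃ a b : Matrix (Fin m) (Fin m) ℂ,
        x = Matrix.fromBlocks a 0 0 b}) ∧
    (∀ k : ℕ, piOmega m μ (2 * k + 1) =
      Submodule.span ℂ {x | ∃ a b : Matrix (Fin m) (Fin m) ℂ,
        x = Matrix.fromBlocks 0 a b 0}) := by
  have hlamC : (lam : ℂ) ≠ 0 := by
    exact_mod_cast (ne_of_gt hlam)
  have hcne : ∀ k : ℕ, ((-(lam : ℂ)) ^ k) ≠ 0 := fun k => pow_ne_zero _ (neg_ne_zero.2 hlamC)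
  refine ⟨?_, ?_, ?_⟩
  · -- piJ = ⊥
    intro k
    match k with
    | 0 => rfl
    | (k + 1) =>
      rw [piJ, Submodule.span_eq_bot]
      rintro x ⟨s, a, l, hlen, hsum, rfl⟩
      have key : ∀ r : Fin s, commM m μ (a r) * ((l r).map (commM m μ)).prod =
          diracM m μ * (piRep m (a r) * ((l r).map (commM m μ)).prod) -
          ((-1 : ℂ) ^ k) • ((piRep m (a r) * ((l r).map (commM m μ)).prod) * diracM m μ) := by
        intro r
        rw [commM, sub_mul, mul_assoc, mul_assoc, prodAnti m μ lam h1 h2, hlen r,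
          mul_smul_comm, mul_assoc]
      simp only [key, Finset.sum_sub_distrib, ← Finset.mul_sum, ← Finset.smul_sum,
        ← Finset.sum_mul, hsum, mul_zero, zero_mul, smul_zero, sub_zero]
  · -- even case
    intro k
    apply le_antisymm
    · rw [piOmega, Submodule.span_le]
      rintro x ⟨a₀, l, hl, rfl⟩
      have he : Even l.length := by rw [hl]; exact even_two_mul k
      obtain ⟨a, b, hab⟩ := (prod_shape m μ l).1 he
      rw [hab, piRep_mul_diag]
      exact Submodule.subset_span ⟨_, _, rfl⟩
    · rw [Submodule.span_le]
      rintro x ⟨a, b, rfl⟩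
      set c : ℂ := (-(lam : ℂ)) ^ k with hc
      apply Submodule.subset_span
      refine ⟨(c⁻¹ • a, c⁻¹ • b), List.replicate (2 * k)
        ((1 : Matrix (Fin m) (Fin m) ℂ), (0 : Matrix (Fin m) (Fin m) ℂ)),
        by simp, ?_⟩
      rw [prod_replicate_e m μ lam h1 h2 k, ← hc, mul_smul_comm, mul_one, piRep,
        Matrix.fromBlocks_smul]
      simp only [smul_smul, mul_inv_cancel₀ (show c ≠ 0 from hcne k), one_smul, smul_zero]
  · -- odd case
    intro k
    apply le_antisymm
    · rw [piOmega, Submodule.span_le]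
      rintro x ⟨a₀, l, hl, rfl⟩
      have he : ¬ Even l.length := by rw [hl]; simp [Nat.even_add_one, parity_simps]
      obtain ⟨a, b, hab⟩ := (prod_shape m μ l).2 he
      rw [hab, piRep_mul_off]
      exact Submodule.subset_span ⟨_, _, rfl⟩
    · rw [Submodule.span_le]
      rintro x ⟨a, b, rfl⟩
      set c : ℂ := (-(lam : ℂ)) ^ k with hc
      apply Submodule.subset_span
      refine ⟨((c * (lam : ℂ))⁻¹ • (a * μ), -((c * (lam : ℂ))⁻¹ • (b * μ.conjTranspose))),
        ((0 : Matrix (Fin m) (Fin m) ℂ), (1 : Matrix (Fin m) (Fin m) ℂ)) ::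
        List.replicate (2 * k) ((1 : Matrix (Fin m) (Fin m) ℂ),
          (0 : Matrix (Fin m) (Fin m) ℂ)), by simp, ?_⟩
      rw [List.map_cons, List.prod_cons, prod_replicate_e m μ lam h1 h2 k, ← hc,
        mul_smul_comm, mul_one, commM_f, mul_smul_comm, piRep_mul_off]
      have e1 : ((c * (lam : ℂ))⁻¹ • (a * μ)) * μ.conjTranspose = c⁻¹ • a := by
        rw [smul_mul_assoc, mul_assoc, h2, mul_smul_comm, mul_one, smul_smul,
          show ((c * (lam : ℂ))⁻¹ * (lam : ℂ)) = c⁻¹ from by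
            rw [_root_.mul_inv_rev, mul_comm ((lam : ℂ))⁻¹ c⁻¹, mul_assoc,
              inv_mul_cancel₀ hlamC, mul_one]]
      have e2 : (-((c * (lam : ℂ))⁻¹ • (b * μ.conjTranspose))) * (-μ) = c⁻¹ • b := by
        rw [Matrix.neg_mul, Matrix.mul_neg, neg_neg, smul_mul_assoc, mul_assoc, h1,
          mul_smul_comm, mul_one, smul_smul,
          show ((c * (lam : ℂ))⁻¹ * (lam : ℂ)) = c⁻¹ from by
            rw [_root_.mul_inv_rev, mul_comm ((lam : ℂ))⁻¹ c⁻¹, mul_assoc,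
              inv_mul_cancel₀ hlamC, mul_one]]
      rw [e1, e2, Matrix.fromBlocks_smul]
      simp only [smul_smul, mul_inv_cancel₀ (show c ≠ 0 from hcne k), one_smul, smul_zero]

end
end

section
/- Let (ω₁, δ₁) and (ω₂, δ₂) be ℕ-graded differential algebras, each generated by a common algebra 𝒜 in degree zero together with its differential, and let π₁ : ω₁ → ℬ, π₂ : ω₂ → ℬ be algebra homomorphisms into an algebra ℬ. If π₁(a) = π₂(a) and π₁(δ₁a) = π₂(δ₂a) for all a ∈ 𝒜, then π₁(ω₁ᵏ) = π₂(ω₂ᵏ) and π₁(J_{π₁}ᵏ) = π₂(J_{π₂}ᵏ) for all k, so that the induced differential algebras Ω_{π₁} = ⊕ₖ π₁(ω₁ᵏ)/π₁(J_{π₁}ᵏ) and Ω_{π₂} = ⊕ₖ π₂(ω₂ᵏ)/π₂(J_{π₂}ᵏ) coincide as subquotient algebras of ℬ. -/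
/-- Lemma: let (ω₁, δ₁), (ω₂, δ₂) be ℕ-graded differential algebras, each
generated by a common algebra 𝒜 in degree zero (via ι₁, ι₂) together with its
differential, and π₁ : ω₁ → ℬ, π₂ : ω₂ → ℬ algebra homomorphisms. If
π₁(a) = π₂(a) and π₁(δ₁a) = π₂(δ₂a) for all a ∈ 𝒜, then π₁(ω₁ᵏ) = π₂(ω₂ᵏ) and
π₁(J_{π₁}ᵏ) = π₂(J_{π₂}ᵏ) for all k, so the induced differential algebras
Ω_{π₁} and Ω_{π₂} coincide as subquotient algebras of ℬ. -/
theorem induced_differential_algebras_coincide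
    (𝒜 Ω₁ Ω₂ ℬ : Type*) [Ring 𝒜] [Ring Ω₁] [Ring Ω₂] [Ring ℬ]
    [Algebra ℂ 𝒜] [Algebra ℂ Ω₁] [Algebra ℂ Ω₂] [Algebra ℂ ℬ]
    (ι₁ : 𝒜 →ₐ[ℂ] Ω₁) (ι₂ : 𝒜 →ₐ[ℂ] Ω₂)
    (δ₁ : Ω₁ →ₗ[ℂ] Ω₁) (δ₂ : Ω₂ →ₗ[ℂ] Ω₂)
    -- the gradings: degree-k parts are spanned by the monomials a₀ δa₁ ⋯ δaₖ
    (G₁ : ℕ → Submodule ℂ Ω₁) (G₂ : ℕ → Submodule ℂ Ω₂)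
    (hG₁ : ∀ k, G₁ k = Submodule.span ℂ {x : Ω₁ | ∃ (a₀ : 𝒜) (l : List 𝒜),
      l.length = k ∧ x = ι₁ a₀ * (l.map (fun a => δ₁ (ι₁ a))).prod})
    (hG₂ : ∀ k, G₂ k = Submodule.span ℂ {x : Ω₂ | ∃ (a₀ : 𝒜) (l : List 𝒜),
      l.length = k ∧ x = ι₂ a₀ * (l.map (fun a => δ₂ (ι₂ a))).prod})
    -- the differentials act on monomials in the universal way
    (hδ₁mono : ∀ (a₀ : 𝒜) (l : List 𝒜),
      δ₁ (ι₁ a₀ * (l.map (fun a => δ₁ (ι₁ a))).prod) =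
        δ₁ (ι₁ a₀) * (l.map (fun a => δ₁ (ι₁ a))).prod)
    (hδ₂mono : ∀ (a₀ : 𝒜) (l : List 𝒜),
      δ₂ (ι₂ a₀ * (l.map (fun a => δ₂ (ι₂ a))).prod) =
        δ₂ (ι₂ a₀) * (l.map (fun a => δ₂ (ι₂ a))).prod)
    -- the algebra homomorphisms into ℬ
    (π₁ : Ω₁ →ₐ[ℂ] ℬ) (π₂ : Ω₂ →ₐ[ℂ] ℬ)
    (hπ : ∀ a : 𝒜, π₁ (ι₁ a) = π₂ (ι₂ a))
    (hπδ : ∀ a : 𝒜, π₁ (δ₁ (ι₁ a)) = π₂ (δ₂ (ι₂ a)))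
    -- the differential ideals J_{πᵢ}ᵏ = (ker πᵢ ∩ ωᵢᵏ) + δᵢ(ker πᵢ ∩ ωᵢ^{k-1})
    (J₁ : ℕ → Submodule ℂ Ω₁) (J₂ : ℕ → Submodule ℂ Ω₂)
    (hJ₁0 : J₁ 0 = LinearMap.ker π₁.toLinearMap ⊓ G₁ 0)
    (hJ₁succ : ∀ k, J₁ (k + 1) = (LinearMap.ker π₁.toLinearMap ⊓ G₁ (k + 1)) ⊔
      Submodule.map δ₁ (LinearMap.ker π₁.toLinearMap ⊓ G₁ k))
    (hJ₂0 : J₂ 0 = LinearMap.ker π₂.toLinearMap ⊓ G₂ 0)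
    (hJ₂succ : ∀ k, J₂ (k + 1) = (LinearMap.ker π₂.toLinearMap ⊓ G₂ (k + 1)) ⊔
      Submodule.map δ₂ (LinearMap.ker π₂.toLinearMap ⊓ G₂ k)) :
    (∀ k, (G₁ k).map π₁.toLinearMap = (G₂ k).map π₂.toLinearMap) ∧
    (∀ k, (J₁ k).map π₁.toLinearMap = (J₂ k).map π₂.toLinearMap) := by
  have hprod : ∀ l : List 𝒜,
      π₁ ((l.map (fun a => δ₁ (ι₁ a))).prod) = π₂ ((l.map (fun a => δ₂ (ι₂ a))).prod) := by
    intro l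
    rw [map_list_prod, map_list_prod, List.map_map, List.map_map]
    congr 1
    exact List.map_congr_left (fun a _ => hπδ a)
  have key₁ : ∀ k, ∀ x ∈ G₁ k, ∃ y ∈ G₂ k, π₁ x = π₂ y ∧ π₁ (δ₁ x) = π₂ (δ₂ y) := by
    intro k x hx
    rw [hG₁ k] at hx
    induction hx using Submodule.span_induction with
    | mem x hx =>
      obtain ⟨a₀, l, hl, rfl⟩ := hx
      refine ⟨ι₂ a₀ * (l.map (fun a => δ₂ (ι₂ a))).prod, ?_, ?_, ?_⟩
      · rw [hG₂ k]; exact Submodule.subset_span ⟨a₀, l, hl, rfl⟩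
      · rw [map_mul, map_mul, hπ, hprod]
      · rw [hδ₁mono, hδ₂mono, map_mul, map_mul, hπδ, hprod]
    | zero => exact ⟨0, (G₂ k).zero_mem, by simp⟩
    | add x y _ _ ihx ihy =>
      obtain ⟨yx, hyx, h1, h2⟩ := ihx
      obtain ⟨yy, hyy, h3, h4⟩ := ihy
      exact ⟨yx + yy, (G₂ k).add_mem hyx hyy, by simp [h1, h3], by simp [h2, h4]⟩
    | smul c x _ ih =>
      obtain ⟨y, hy, h1, h2⟩ := ih
      exact ⟨c • y, (G₂ k).smul_mem c hy, by simp [h1], by simp [h2]⟩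
  have key₂ : ∀ k, ∀ x ∈ G₂ k, ∃ y ∈ G₁ k, π₂ x = π₁ y ∧ π₂ (δ₂ x) = π₁ (δ₁ y) := by
    intro k x hx
    rw [hG₂ k] at hx
    induction hx using Submodule.span_induction with
    | mem x hx =>
      obtain ⟨a₀, l, hl, rfl⟩ := hx
      refine ⟨ι₁ a₀ * (l.map (fun a => δ₁ (ι₁ a))).prod, ?_, ?_, ?_⟩
      · rw [hG₁ k]; exact Submodule.subset_span ⟨a₀, l, hl, rfl⟩
      · rw [map_mul, map_mul, hπ, hprod]
      · rw [hδ₁mono, hδ₂mono, map_mul, map_mul, hπδ, hprod]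
    | zero => exact ⟨0, (G₁ k).zero_mem, by simp⟩
    | add x y _ _ ihx ihy =>
      obtain ⟨yx, hyx, h1, h2⟩ := ihx
      obtain ⟨yy, hyy, h3, h4⟩ := ihy
      exact ⟨yx + yy, (G₁ k).add_mem hyx hyy, by simp [h1, h3], by simp [h2, h4]⟩
    | smul c x _ ih =>
      obtain ⟨y, hy, h1, h2⟩ := ih
      exact ⟨c • y, (G₁ k).smul_mem c hy, by simp [h1], by simp [h2]⟩
  have hG : ∀ k, (G₁ k).map π₁.toLinearMap = (G₂ k).map π₂.toLinearMap := by
    intro k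
    apply le_antisymm
    · rintro _ ⟨x, hx, rfl⟩
      obtain ⟨y, hy, h1, _⟩ := key₁ k x hx
      exact ⟨y, hy, h1.symm⟩
    · rintro _ ⟨x, hx, rfl⟩
      obtain ⟨y, hy, h1, _⟩ := key₂ k x hx
      exact ⟨y, hy, h1.symm⟩
  refine ⟨hG, ?_⟩
  have hker₁ : ∀ S : Submodule ℂ Ω₁,
      (LinearMap.ker π₁.toLinearMap ⊓ S).map π₁.toLinearMap = ⊥ := by
    intro S
    rw [eq_bot_iff]
    rintro _ ⟨x, ⟨hx, _⟩, rfl⟩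
    exact hx
  have hker₂ : ∀ S : Submodule ℂ Ω₂,
      (LinearMap.ker π₂.toLinearMap ⊓ S).map π₂.toLinearMap = ⊥ := by
    intro S
    rw [eq_bot_iff]
    rintro _ ⟨x, ⟨hx, _⟩, rfl⟩
    exact hx
  intro k
  match k with
  | 0 => rw [hJ₁0, hJ₂0, hker₁, hker₂]
  | k + 1 =>
    rw [hJ₁succ, hJ₂succ, Submodule.map_sup, Submodule.map_sup, hker₁, hker₂,
      bot_sup_eq, bot_sup_eq]
    apply le_antisymm
    · rintro _ ⟨_, ⟨x, ⟨hxk, hxG⟩, rfl⟩, rfl⟩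
      obtain ⟨y, hy, h1, h2⟩ := key₁ k x hxG
      refine ⟨δ₂ y, ⟨y, ⟨?_, hy⟩, rfl⟩, h2.symm⟩
      show π₂ y = 0
      rw [← h1]; exact hxk
    · rintro _ ⟨_, ⟨x, ⟨hxk, hxG⟩, rfl⟩, rfl⟩
      obtain ⟨y, hy, h1, h2⟩ := key₂ k x hxG
      refine ⟨δ₁ y, ⟨y, ⟨?_, hy⟩, rfl⟩, h2.symm⟩
      show π₁ y = 0
      rw [← h1]; exact hxk
end

section
/- Let α : ω → ω₁ and β : ω₁ → ω₂ be differential algebra homomorphisms between ℕ-graded differential algebras, and π = β ∘ α. Then for each k there is a natural isomorphism Ω_πᵏ ≅ β_q(Ω_αᵏ) / β_q(J_{β_q}ᵏ), where Ω_α = ⊕ₖ α(ωᵏ)/α(J_αᵏ), β_q is the homomorphism induced by β on the quotient, and J_{β_q}ᵏ = d_{Ω_α}(ker β_qᵏ⁻¹) + ker β_qᵏ; moreover this isomorphism intertwines the differentials and multiplications, giving an isomorphism of ℕ-graded differential algebras ⊕ₖ Ω_πᵏ ≅ ⊕ₖ β_q(Ω_αᵏ)/β_q(J_{β_q}ᵏ).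 -/
set_option maxHeartbeats 2000000 in
/-- Proposition: let α : ω → ω₁, β : ω₁ → ω₂ be differential algebra
homomorphisms between ℕ-graded differential algebras and π = β ∘ α. Then for
each k there is a natural isomorphism Ω_πᵏ ≅ β_q(Ω_αᵏ)/β_q(J_{β_q}ᵏ), acting as
the identity on representatives π(x), and (being the identity on
representatives) it intertwines the induced differentials and multiplications,
i.e. it is an isomorphism of ℕ-graded differential algebras
⊕ₖ Ω_πᵏ ≅ ⊕ₖ β_q(Ω_αᵏ)/β_q(J_{β_q}ᵏ).
Here Ω_γᵏ = γ(ωᵏ)/γ(J_γᵏ) with J_γᵏ = d(ker γ^{k-1}) + ker γᵏ, β_q is the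
homomorphism induced by β on the quotients Ω_αᵏ, d_{Ω_α} the induced
differential, and J_{β_q}ᵏ = d_{Ω_α}(ker β_q^{k-1}) + ker β_qᵏ. -/
theorem Omega_pi_iso
    (ω ω₁ ω₂ : Type*) [Ring ω] [Ring ω₁] [Ring ω₂]
    [Algebra ℂ ω] [Algebra ℂ ω₁] [Algebra ℂ ω₂]
    -- the ℕ-grading on ω and its differential d
    (G : ℕ → Submodule ℂ ω) (hGmul : ∀ i j, G i * G j ≤ G (i + j))
    (d : ω →ₗ[ℂ] ω) (hddeg : ∀ k, (G k).map d ≤ G (k + 1))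
    (hdsq : ∀ x, d (d x) = 0)
    -- the differential algebra homomorphisms α, β and their composition π
    (d₁ : ω₁ →ₗ[ℂ] ω₁) (d₂ : ω₂ →ₗ[ℂ] ω₂)
    (α : ω →ₐ[ℂ] ω₁) (β : ω₁ →ₐ[ℂ] ω₂)
    (hα : ∀ x, α (d x) = d₁ (α x)) (hβ : ∀ y, β (d₁ y) = d₂ (β y))
    (π : ω →ₐ[ℂ] ω₂) (hπ : π = β.comp α)
    -- the differential ideals J_γᵏ = d(ker γ^{k-1}) + ker γᵏ for γ = α, π
    (Jα Jπ : ℕ → Submodule ℂ ω)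
    (hJα0 : Jα 0 = LinearMap.ker α.toLinearMap ⊓ G 0)
    (hJαsucc : ∀ k, Jα (k + 1) = (LinearMap.ker α.toLinearMap ⊓ G (k + 1)) ⊔
      Submodule.map d (LinearMap.ker α.toLinearMap ⊓ G k))
    (hJπ0 : Jπ 0 = LinearMap.ker π.toLinearMap ⊓ G 0)
    (hJπsucc : ∀ k, Jπ (k + 1) = (LinearMap.ker π.toLinearMap ⊓ G (k + 1)) ⊔
      Submodule.map d (LinearMap.ker π.toLinearMap ⊓ G k))
    -- the induced maps β_q : Ω_αᵏ → β(α(ωᵏ))/β(α(J_αᵏ)), acting as β on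
    -- representatives
    (βq : ∀ k, (↥((G k).map α.toLinearMap) ⧸
        (((Jα k).map α.toLinearMap).comap ((G k).map α.toLinearMap).subtype)) →ₗ[ℂ]
      (↥((G k).map π.toLinearMap) ⧸
        (((Jα k).map π.toLinearMap).comap ((G k).map π.toLinearMap).subtype)))
    (hβq : ∀ k x (hx : x ∈ G k),
      βq k (Submodule.Quotient.mk ⟨α x, Submodule.mem_map_of_mem hx⟩) =
        Submodule.Quotient.mk ⟨π x, Submodule.mem_map_of_mem hx⟩)
    -- the induced differential d_{Ω_α} : Ω_αᵏ → Ω_α^{k+1}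
    (dΩα : ∀ k, (↥((G k).map α.toLinearMap) ⧸
        (((Jα k).map α.toLinearMap).comap ((G k).map α.toLinearMap).subtype)) →ₗ[ℂ]
      (↥((G (k + 1)).map α.toLinearMap) ⧸
        (((Jα (k + 1)).map α.toLinearMap).comap ((G (k + 1)).map α.toLinearMap).subtype)))
    (hdΩα : ∀ k x (hx : x ∈ G k),
      dΩα k (Submodule.Quotient.mk ⟨α x, Submodule.mem_map_of_mem hx⟩) =
        Submodule.Quotient.mk
          ⟨α (d x), Submodule.mem_map_of_mem (hddeg k (Submodule.mem_map_of_mem hx))⟩)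
    -- the ideal J_{β_q}ᵏ = d_{Ω_α}(ker β_q^{k-1}) + ker β_qᵏ
    (Jβq : ∀ k, Submodule ℂ (↥((G k).map α.toLinearMap) ⧸
        (((Jα k).map α.toLinearMap).comap ((G k).map α.toLinearMap).subtype)))
    (hJβq0 : Jβq 0 = LinearMap.ker (βq 0))
    (hJβqsucc : ∀ k, Jβq (k + 1) =
      Submodule.map (dΩα k) (LinearMap.ker (βq k)) ⊔ LinearMap.ker (βq (k + 1))) :
    -- the isomorphisms e k : Ω_πᵏ ≅ β_q(Ω_αᵏ)/β_q(J_{β_q}ᵏ), the identity on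
    -- representatives π(x)
    ∃ e : ∀ k, (↥((G k).map π.toLinearMap) ⧸
        (((Jπ k).map π.toLinearMap).comap ((G k).map π.toLinearMap).subtype)) ≃ₗ[ℂ]
      (↥((G k).map π.toLinearMap) ⧸
          (((Jα k).map π.toLinearMap).comap ((G k).map π.toLinearMap).subtype)) ⧸
        Submodule.map (βq k) (Jβq k),
      -- e is the identity on representatives
      (∀ k x (hx : x ∈ G k),
        e k (Submodule.Quotient.mk ⟨π x, Submodule.mem_map_of_mem hx⟩) =
          Submodule.Quotient.mk
            (Submodule.Quotient.mk ⟨π x, Submodule.mem_map_of_mem hx⟩)) ∧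
      -- e intertwines the induced differentials: i ∘ d_{Ω_π} = d_{RHS} ∘ i on
      -- representatives
      (∀ k x (hx : x ∈ G k),
        e (k + 1) (Submodule.Quotient.mk
            ⟨π (d x), Submodule.mem_map_of_mem (hddeg k (Submodule.mem_map_of_mem hx))⟩) =
          Submodule.Quotient.mk (Submodule.Quotient.mk
            ⟨π (d x), Submodule.mem_map_of_mem (hddeg k (Submodule.mem_map_of_mem hx))⟩)) ∧
      -- e intertwines the multiplications, defined on representatives
      (∀ k l x y (hx : x ∈ G k) (hy : y ∈ G l),
        e (k + l) (Submodule.Quotient.mk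
            ⟨π (x * y), Submodule.mem_map_of_mem (hGmul k l
              (Submodule.mul_mem_mul hx hy))⟩) =
          Submodule.Quotient.mk (Submodule.Quotient.mk
            ⟨π (x * y), Submodule.mem_map_of_mem (hGmul k l
              (Submodule.mul_mem_mul hx hy))⟩)) := by
  have hπapp : ∀ x, π x = β (α x) := fun x => by rw [hπ]; rfl
  have hkerle : LinearMap.ker α.toLinearMap ≤ LinearMap.ker π.toLinearMap := by
    intro x hx
    rw [LinearMap.mem_ker] at hx ⊢
    show π x = 0
    rw [hπapp, show α x = 0 from hx, map_zero]
  have hJle : ∀ k, Jα k ≤ Jπ k := by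
    intro k
    cases k with
    | zero => rw [hJα0, hJπ0]; exact inf_le_inf_right _ hkerle
    | succ k =>
        rw [hJαsucc, hJπsucc]
        exact sup_le_sup (inf_le_inf_right _ hkerle)
          (Submodule.map_mono (inf_le_inf_right _ hkerle))
  have hJαG : ∀ k, Jα k ≤ G k := by
    intro k
    cases k with
    | zero => rw [hJα0]; exact inf_le_right
    | succ k =>
        rw [hJαsucc]
        exact sup_le inf_le_right ((Submodule.map_mono inf_le_right).trans (hddeg k))
  have hdJα : ∀ k, (Jα k).map d ≤ Jα (k + 1) := by
    intro k
    cases k with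
    | zero => rw [hJα0, hJαsucc]; exact le_sup_right
    | succ k =>
        rw [hJαsucc k, hJαsucc (k + 1), Submodule.map_sup]
        refine sup_le le_sup_right ?_
        rintro z hz
        obtain ⟨_, ⟨y, -, rfl⟩, rfl⟩ := hz
        simpa [hdsq y] using Submodule.zero_mem _
  -- abbreviations
  set M : ∀ k, Submodule ℂ ω₂ := fun k => (G k).map π.toLinearMap with hM
  set S : ∀ k, Submodule ℂ (M k) :=
    fun k => ((Jα k).map π.toLinearMap).comap (M k).subtype with hS
  set T : ∀ k, Submodule ℂ (M k) :=
    fun k => ((Jπ k).map π.toLinearMap).comap (M k).subtype with hT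
  have hST : ∀ k, S k ≤ T k := fun k =>
    Submodule.comap_mono (Submodule.map_mono (hJle k))
  -- the key identity
  have hEq : ∀ k, (T k).map (S k).mkQ = (Jβq k).map (βq k) := by
    intro k
    cases k with
    | zero =>
        apply le_antisymm
        · rintro _ ⟨z, hz, rfl⟩
          obtain ⟨t, ht, hte⟩ := hz
          rw [hJπ0] at ht
          have hte' : π.toLinearMap t = (z : ω₂) := hte
          have hz0 : (z : ω₂) = 0 := by
            rw [← hte']
            exact ht.1
          have : z = 0 := Subtype.ext hz0
          rw [this]
          simpa using Submodule.zero_mem _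
        · rintro _ ⟨c, hc, rfl⟩
          rw [hJβq0] at hc
          have hc0 : βq 0 c = 0 := hc
          rw [hc0]
          exact Submodule.zero_mem _
    | succ k =>
        apply le_antisymm
        · rintro _ ⟨z, hz, rfl⟩
          obtain ⟨t, ht, hte⟩ := hz
          rw [hJπsucc] at ht
          obtain ⟨u, hu, s, hs, rfl⟩ := Submodule.mem_sup.mp ht
          obtain ⟨v, hv, rfl⟩ := hs
          have hπu : π u = 0 := hu.1
          have hte' : π.toLinearMap (u + d v) = (z : ω₂) := hte
          have hπt : π (d v) = (z : ω₂) := by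
            rw [← hte']
            show π (d v) = π (u + d v)
            rw [map_add, hπu, zero_add]
          have hvG : v ∈ G k := hv.2
          have hvker : (Submodule.Quotient.mk
              ⟨α v, Submodule.mem_map_of_mem hvG⟩ :
              (↥((G k).map α.toLinearMap) ⧸
                (((Jα k).map α.toLinearMap).comap
                  ((G k).map α.toLinearMap).subtype))) ∈ LinearMap.ker (βq k) := by
            rw [LinearMap.mem_ker, hβq k v hvG]
            rw [Submodule.Quotient.mk_eq_zero]
            refine Submodule.mem_comap.mpr ?_
            have hv0 : π v = 0 := hv.1
            simpa [hv0] using Submodule.zero_mem ((Jα k).map π.toLinearMap)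
          refine ⟨dΩα k (Submodule.Quotient.mk ⟨α v, Submodule.mem_map_of_mem hvG⟩), ?_, ?_⟩
          · rw [hJβqsucc]
            exact Submodule.mem_sup_left (Submodule.mem_map_of_mem hvker)
          · rw [hdΩα k v hvG, hβq (k + 1) (d v)
              (hddeg k (Submodule.mem_map_of_mem hvG))]
            show _ = Submodule.Quotient.mk z
            exact congrArg Submodule.Quotient.mk (Subtype.ext hπt)
        · rw [hJβqsucc, Submodule.map_sup]
          refine sup_le ?_ ?_
          · rintro _ ⟨_, ⟨c, hc, rfl⟩, rfl⟩
            obtain ⟨z, rfl⟩ := Submodule.Quotient.mk_surjective _ c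
            obtain ⟨x, hx, hxe⟩ := z.2
            have hz : z = ⟨α x, Submodule.mem_map_of_mem hx⟩ := Subtype.ext hxe.symm
            subst hz
            have hc0 : βq k (Submodule.Quotient.mk
                ⟨α x, Submodule.mem_map_of_mem hx⟩) = 0 := hc
            rw [hβq k x hx, Submodule.Quotient.mk_eq_zero,
              Submodule.mem_comap] at hc0
            obtain ⟨j, hj, hje⟩ := hc0
            have hje' : π j = π x := hje
            have hjG : j ∈ G k := hJαG k hj
            have hvG : x - j ∈ G k := sub_mem hx hjG
            have hvker : π (x - j) = 0 := by
              rw [map_sub, hje', sub_self]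
            have hdvJπ : d (x - j) ∈ Jπ (k + 1) := by
              rw [hJπsucc]
              exact Submodule.mem_sup_right
                (Submodule.mem_map_of_mem ⟨hvker, hvG⟩)
            have hdvM : π (d (x - j)) ∈ M (k + 1) :=
              Submodule.mem_map_of_mem (hddeg k (Submodule.mem_map_of_mem hvG))
            refine ⟨⟨π (d (x - j)), hdvM⟩, ?_, ?_⟩
            · exact Submodule.mem_comap.mpr (Submodule.mem_map_of_mem hdvJπ)
            · rw [hdΩα k x hx, hβq (k + 1) (d x)
                (hddeg k (Submodule.mem_map_of_mem hx))]
              show Submodule.Quotient.mk _ = Submodule.Quotient.mk _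
              rw [Submodule.Quotient.eq]
              refine Submodule.mem_comap.mpr ?_
              have hdj : d j ∈ Jα (k + 1) := hdJα k (Submodule.mem_map_of_mem hj)
              have hval : π (d (x - j)) - π (d x) = -(π (d j)) := by
                simp only [map_sub]
                abel
              show π (d (x - j)) - π (d x) ∈ (Jα (k + 1)).map π.toLinearMap
              rw [hval]
              exact neg_mem (Submodule.mem_map_of_mem hdj)
          · rintro _ ⟨c, hc, rfl⟩
            have hc0 : βq (k + 1) c = 0 := hc
            rw [hc0]
            exact Submodule.zero_mem _
  have key : ∀ k (z : M k),
      ((Submodule.quotientQuotientEquivQuotient (S k) (T k) (hST k)).symm.trans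
        (Submodule.quotEquivOfEq _ _ (hEq k)))
        (Submodule.Quotient.mk z) =
        Submodule.Quotient.mk (Submodule.Quotient.mk z) := by
    intro k z
    rw [LinearEquiv.trans_apply]
    have h1 : (Submodule.quotientQuotientEquivQuotient (S k) (T k) (hST k)).symm
        (Submodule.Quotient.mk z) =
        Submodule.Quotient.mk (Submodule.Quotient.mk z) := by
      rw [LinearEquiv.symm_apply_eq]
      exact (Submodule.quotientQuotientEquivQuotientAux_mk_mk _ _ _ _).symm
    rw [h1, Submodule.quotEquivOfEq_mk]
  exact ⟨fun k => (Submodule.quotientQuotientEquivQuotient (S k) (T k) (hST k)).symm.trans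
      (Submodule.quotEquivOfEq _ _ (hEq k)),
    fun k x hx => key k _, fun k x hx => key (k + 1) _,
    fun k l x y hx hy => key (k + l) _⟩
end

section
/- Key step in Proposition: with π = β ∘ α as above, ker β_qᵏ = α(ker πᵏ + J_αᵏ)/α(J_αᵏ) as subspaces of Ω_αᵏ. -/
/-- Key step: with π = β ∘ α a composition of differential algebra
homomorphisms, ker β_qᵏ = α(ker πᵏ + J_αᵏ)/α(J_αᵏ) as subspaces of
Ω_αᵏ = α(ωᵏ)/α(J_αᵏ). -/
theorem ker_beta_q
    (ω ω₁ ω₂ : Type*) [Ring ω] [Ring ω₁] [Ring ω₂]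
    [Algebra ℂ ω] [Algebra ℂ ω₁] [Algebra ℂ ω₂]
    -- the ℕ-grading on ω and its differential d
    (G : ℕ → Submodule ℂ ω) (hGmul : ∀ i j, G i * G j ≤ G (i + j))
    (d : ω →ₗ[ℂ] ω) (hddeg : ∀ k, (G k).map d ≤ G (k + 1))
    (hdsq : ∀ x, d (d x) = 0)
    -- the differential algebra homomorphisms α, β and their composition π
    (d₁ : ω₁ →ₗ[ℂ] ω₁) (d₂ : ω₂ →ₗ[ℂ] ω₂)
    (α : ω →ₐ[ℂ] ω₁) (β : ω₁ →ₐ[ℂ] ω₂)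
    (hα : ∀ x, α (d x) = d₁ (α x)) (hβ : ∀ y, β (d₁ y) = d₂ (β y))
    (π : ω →ₐ[ℂ] ω₂) (hπ : π = β.comp α)
    -- the differential ideal J_αᵏ = d(ker α^{k-1}) + ker αᵏ
    (Jα : ℕ → Submodule ℂ ω)
    (hJα0 : Jα 0 = LinearMap.ker α.toLinearMap ⊓ G 0)
    (hJαsucc : ∀ k, Jα (k + 1) = (LinearMap.ker α.toLinearMap ⊓ G (k + 1)) ⊔
      Submodule.map d (LinearMap.ker α.toLinearMap ⊓ G k))
    -- a fixed degree k
    (k : ℕ)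
    -- the induced map β_q : Ω_αᵏ = α(ωᵏ)/α(J_αᵏ) → β(α(ωᵏ))/β(α(J_αᵏ))
    (βq : (↥((G k).map α.toLinearMap) ⧸
        (((Jα k).map α.toLinearMap).comap ((G k).map α.toLinearMap).subtype)) →ₗ[ℂ]
      (↥((G k).map π.toLinearMap) ⧸
        (((Jα k).map π.toLinearMap).comap ((G k).map π.toLinearMap).subtype)))
    (hβq : ∀ x (hx : x ∈ G k),
      βq (Submodule.Quotient.mk ⟨α x, Submodule.mem_map_of_mem hx⟩) =
        Submodule.Quotient.mk ⟨π x, Submodule.mem_map_of_mem hx⟩) :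
    LinearMap.ker βq =
      Submodule.map
        ((((Jα k).map α.toLinearMap).comap ((G k).map α.toLinearMap).subtype)).mkQ
        (Submodule.comap ((G k).map α.toLinearMap).subtype
          (Submodule.map α.toLinearMap ((LinearMap.ker π.toLinearMap ⊓ G k) ⊔ Jα k))) := by

  have hJG : Jα k ≤ G k := by
    cases k with
    | zero => rw [hJα0]; exact inf_le_right
    | succ n =>
      rw [hJαsucc]
      apply sup_le inf_le_right
      intro x hx
      obtain ⟨y, hy, rfl⟩ := hx
      exact hddeg n ⟨y, hy.2, rfl⟩
  apply le_antisymm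
  · rintro q hq
    obtain ⟨⟨y, hy⟩, rfl⟩ := Submodule.Quotient.mk_surjective _ q
    obtain ⟨x, hx, rfl⟩ := hy
    have hq' : βq (Submodule.Quotient.mk ⟨α x, Submodule.mem_map_of_mem hx⟩) = 0 := hq
    rw [hβq x hx, Submodule.Quotient.mk_eq_zero, Submodule.mem_comap] at hq'
    obtain ⟨j, hj, hjx⟩ := hq'
    refine ⟨⟨α x, Submodule.mem_map_of_mem hx⟩, ?_, rfl⟩
    rw [SetLike.mem_coe, Submodule.mem_comap]
    refine ⟨x, ?_, rfl⟩
    have h1 : x - j ∈ LinearMap.ker π.toLinearMap ⊓ G k :=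
      ⟨by simp [LinearMap.mem_ker, map_sub, hjx], Submodule.sub_mem _ hx (hJG hj)⟩
    have h2 := Submodule.add_mem _ (Submodule.mem_sup_left h1)
      (Submodule.mem_sup_right hj :
        j ∈ (LinearMap.ker π.toLinearMap ⊓ G k) ⊔ Jα k)
    simpa using h2
  · rintro q ⟨⟨y, hy⟩, hmem, rfl⟩
    rw [SetLike.mem_coe, Submodule.mem_comap] at hmem
    obtain ⟨z, hz, hzy⟩ := hmem
    obtain ⟨u, hu, j, hj, rfl⟩ := Submodule.mem_sup.mp hz
    have hzG : u + j ∈ G k := Submodule.add_mem _ hu.2 (hJG hj)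
    have heq : (⟨y, hy⟩ : ((G k).map α.toLinearMap)) =
        ⟨α (u + j), Submodule.mem_map_of_mem hzG⟩ := Subtype.ext hzy.symm
    rw [LinearMap.mem_ker, Submodule.mkQ_apply, heq, hβq (u + j) hzG,
      Submodule.Quotient.mk_eq_zero, Submodule.mem_comap]
    refine ⟨j, hj, ?_⟩
    have hu0 : π u = 0 := hu.1
    simp [map_add, hu0]
end
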